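/- arXiv:1104.3011 — 7 statements merged into one kernel-verified Lean document; each statement's English description precedes it below -/
import Mathlib

section
/- Let u, v : ℝ⁴ → ℝ be smooth functions of (t,x,y,z), let λ ∈ ℝ, and define E := u_{xz} − u_{ty} − u_{yy}u_{zz} + u_{yz}². Define the first-order differential operators L₁ := (u_{yz}+λ)∂_z − u_{zz}∂_y and L₂ := u_{yy}∂_z − (u_{yz}−λ)∂_y. Then the commutator identity [∂_t − L₁, ∂_x − L₂] v = (∂_y E)·(∂_z v) − (∂_z E)·(∂_y v) holds identically on ℝ⁴. -/
/-- Partial derivative with respect to the first coordinate `t`. -/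
noncomputable def pT (f : ℝ → ℝ → ℝ → ℝ → ℝ) : ℝ → ℝ → ℝ → ℝ → ℝ :=
  fun t x y z => deriv (fun s => f s x y z) t

/-- Partial derivative with respect to the second coordinate `x`. -/
noncomputable def pX (f : ℝ → ℝ → ℝ → ℝ → ℝ) : ℝ → ℝ → ℝ → ℝ → ℝ :=
  fun t x y z => deriv (fun s => f t s y z) x

/-- Partial derivative with respect to the third coordinate `y`. -/
noncomputable def pY (f : ℝ → ℝ → ℝ → ℝ → ℝ) : ℝ → ℝ → ℝ → ℝ → ℝ :=
  fun t x y z => deriv (fun s => f t x s z) y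

/-- Partial derivative with respect to the fourth coordinate `z`. -/
noncomputable def pZ (f : ℝ → ℝ → ℝ → ℝ → ℝ) : ℝ → ℝ → ℝ → ℝ → ℝ :=
  fun t x y z => deriv (fun s => f t x y s) z

/-- Smoothness of a function of four real variables. -/
def Smooth4 (f : ℝ → ℝ → ℝ → ℝ → ℝ) : Prop :=
  ContDiff ℝ (⊤ : ℕ∞) (fun p : ℝ × ℝ × ℝ × ℝ => f p.1 p.2.1 p.2.2.1 p.2.2.2)

/-- The second-heavenly-equation expression `E = u_xz - u_ty - u_yy u_zz + u_yz ^ 2`. -/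
noncomputable def heavenlyE (u : ℝ → ℝ → ℝ → ℝ → ℝ) : ℝ → ℝ → ℝ → ℝ → ℝ :=
  fun t x y z =>
    pX (pZ u) t x y z - pT (pY u) t x y z
      - pY (pY u) t x y z * pZ (pZ u) t x y z + (pY (pZ u) t x y z) ^ 2

/-- `u` solves Plebański's second heavenly equation. -/
def IsHeavenly (u : ℝ → ℝ → ℝ → ℝ → ℝ) : Prop :=
  ∀ t x y z : ℝ,
    pX (pZ u) t x y z =
      pT (pY u) t x y z + pY (pY u) t x y z * pZ (pZ u) t x y z - (pY (pZ u) t x y z) ^ 2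

/-- The operator `∂_t − L₁` with `L₁ = (u_yz+λ)∂_z − u_zz ∂_y`. -/
noncomputable def opA (u : ℝ → ℝ → ℝ → ℝ → ℝ) (lam : ℝ) (w : ℝ → ℝ → ℝ → ℝ → ℝ) :
    ℝ → ℝ → ℝ → ℝ → ℝ :=
  fun t x y z =>
    pT w t x y z - ((pY (pZ u) t x y z + lam) * pZ w t x y z - pZ (pZ u) t x y z * pY w t x y z)

/-- The operator `∂_x − L₂` with `L₂ = u_yy ∂_z − (u_yz−λ)∂_y`. -/
noncomputable def opB (u : ℝ → ℝ → ℝ → ℝ → ℝ) (lam : ℝ) (w : ℝ → ℝ → ℝ → ℝ → ℝ) :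
    ℝ → ℝ → ℝ → ℝ → ℝ :=
  fun t x y z =>
    pX w t x y z - (pY (pY u) t x y z * pZ w t x y z - (pY (pZ u) t x y z - lam) * pY w t x y z)

abbrev E4 : Type := ℝ × ℝ × ℝ × ℝ

def unc (f : ℝ → ℝ → ℝ → ℝ → ℝ) : E4 → ℝ := fun p => f p.1 p.2.1 p.2.2.1 p.2.2.2

noncomputable def DD (w : E4) (f : ℝ → ℝ → ℝ → ℝ → ℝ) : ℝ → ℝ → ℝ → ℝ → ℝ :=
  fun t x y z => fderiv ℝ (unc f) (t, x, y, z) w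

def eT : E4 := (1, 0, 0, 0)
def eX : E4 := (0, 1, 0, 0)
def eY : E4 := (0, 0, 1, 0)
def eZ : E4 := (0, 0, 0, 1)

lemma smooth_unc {f} (hf : Smooth4 f) : ContDiff ℝ (⊤ : ℕ∞) (unc f) := hf

lemma Smooth4.dd {f} (hf : Smooth4 f) (w : E4) : Smooth4 (DD w f) := by
  have h : ContDiff ℝ (⊤ : ℕ∞) (fun p : E4 => fderiv ℝ (unc f) p w) :=
    ((smooth_unc hf).fderiv_right (by simp)).clm_apply contDiff_const
  exact h

lemma Smooth4.sub {f g} (hf : Smooth4 f) (hg : Smooth4 g) :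
    Smooth4 (fun a b c d => f a b c d - g a b c d) :=
  ContDiff.sub hf hg

lemma Smooth4.mul {f g} (hf : Smooth4 f) (hg : Smooth4 g) :
    Smooth4 (fun a b c d => f a b c d * g a b c d) :=
  ContDiff.mul hf hg

lemma Smooth4.sub_const {f} (hf : Smooth4 f) (c : ℝ) :
    Smooth4 (fun a b c' d => f a b c' d - c) :=
  ContDiff.sub hf contDiff_const

lemma diffAt_unc {f} (hf : Smooth4 f) (p : E4) : DifferentiableAt ℝ (unc f) p :=
  ((smooth_unc hf).differentiable (by simp)).differentiableAt

lemma pT_eq {f} (hf : Smooth4 f) : pT f = DD eT f := by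
  funext t x y z
  have hl : HasDerivAt (fun s : ℝ => ((s, x, y, z) : E4)) eT t :=
    (hasDerivAt_id t).prodMk (hasDerivAt_const t (x, y, z))
  exact (((diffAt_unc hf (t, x, y, z)).hasFDerivAt).comp_hasDerivAt t hl).deriv

lemma pX_eq {f} (hf : Smooth4 f) : pX f = DD eX f := by
  funext t x y z
  have hl : HasDerivAt (fun s : ℝ => ((t, s, y, z) : E4)) eX x :=
    (hasDerivAt_const x t).prodMk ((hasDerivAt_id x).prodMk (hasDerivAt_const x (y, z)))
  exact (((diffAt_unc hf (t, x, y, z)).hasFDerivAt).comp_hasDerivAt x hl).deriv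

lemma pY_eq {f} (hf : Smooth4 f) : pY f = DD eY f := by
  funext t x y z
  have hl : HasDerivAt (fun s : ℝ => ((t, x, s, z) : E4)) eY y :=
    (hasDerivAt_const y t).prodMk
      ((hasDerivAt_const y x).prodMk ((hasDerivAt_id y).prodMk (hasDerivAt_const y z)))
  exact (((diffAt_unc hf (t, x, y, z)).hasFDerivAt).comp_hasDerivAt y hl).deriv

lemma pZ_eq {f} (hf : Smooth4 f) : pZ f = DD eZ f := by
  funext t x y z
  have hl : HasDerivAt (fun s : ℝ => ((t, x, y, s) : E4)) eZ z :=
    (hasDerivAt_const z t).prodMk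
      ((hasDerivAt_const z x).prodMk ((hasDerivAt_const z y).prodMk (hasDerivAt_id z)))
  exact (((diffAt_unc hf (t, x, y, z)).hasFDerivAt).comp_hasDerivAt z hl).deriv

lemma DD_sub {f g} (hf : Smooth4 f) (hg : Smooth4 g) {w : E4} {t x y z : ℝ} :
    DD w (fun a b c d => f a b c d - g a b c d) t x y z
      = DD w f t x y z - DD w g t x y z := by
  show fderiv ℝ (fun p : E4 => unc f p - unc g p) (t, x, y, z) w = _
  rw [fderiv_fun_sub (diffAt_unc hf _) (diffAt_unc hg _)]
  rfl

lemma DD_mul {f g} (hf : Smooth4 f) (hg : Smooth4 g) {w : E4} {t x y z : ℝ} :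
    DD w (fun a b c d => f a b c d * g a b c d) t x y z
      = DD w f t x y z * g t x y z + f t x y z * DD w g t x y z := by
  show fderiv ℝ (fun p : E4 => unc f p * unc g p) (t, x, y, z) w
      = fderiv ℝ (unc f) (t, x, y, z) w * unc g (t, x, y, z)
        + unc f (t, x, y, z) * fderiv ℝ (unc g) (t, x, y, z) w
  rw [fderiv_fun_mul (diffAt_unc hf _) (diffAt_unc hg _)]
  simp [ContinuousLinearMap.add_apply, ContinuousLinearMap.smul_apply, smul_eq_mul]
  ring

lemma DD_sub_const {f} (hf : Smooth4 f) (c : ℝ) {w : E4} {t x y z : ℝ} :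
    DD w (fun a b c' d => f a b c' d - c) t x y z = DD w f t x y z := by
  show fderiv ℝ (fun p : E4 => unc f p - c) (t, x, y, z) w
      = fderiv ℝ (unc f) (t, x, y, z) w
  rw [fderiv_sub_const]

lemma DD_comm {f} (hf : Smooth4 f) (w w' : E4) : DD w (DD w' f) = DD w' (DD w f) := by
  funext t x y z
  have hF : ContDiff ℝ (⊤ : ℕ∞) (unc f) := hf
  have hd : DifferentiableAt ℝ (fderiv ℝ (unc f)) (t, x, y, z) :=
    ((hF.fderiv_right (m := (⊤ : ℕ∞)) (by simp)).differentiable (by simp)).differentiableAt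
  have hsym := (hF.contDiffAt (x := ((t, x, y, z) : E4))).isSymmSndFDerivAt (by rw [minSmoothness_of_isRCLikeNormedField]; exact WithTop.coe_le_coe.2 (le_top : (2 : ℕ∞) ≤ ⊤))
  show fderiv ℝ (fun p : E4 => fderiv ℝ (unc f) p w') (t, x, y, z) w
      = fderiv ℝ (fun p : E4 => fderiv ℝ (unc f) p w) (t, x, y, z) w'
  rw [fderiv_clm_apply hd (differentiableAt_const w'),
      fderiv_clm_apply hd (differentiableAt_const w)]
  simp only [ContinuousLinearMap.add_apply, ContinuousLinearMap.flip_apply,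
    ContinuousLinearMap.coe_comp', Function.comp_apply, fderiv_const, fderiv_const_apply,
    Pi.zero_apply, ContinuousLinearMap.zero_apply, map_zero, add_zero, zero_add]
  exact hsym w w'

lemma DD_combo {f1 f2 f3 f4 f5 : ℝ → ℝ → ℝ → ℝ → ℝ} {c2 c4 : ℝ}
    (h1 : Smooth4 f1) (h2 : Smooth4 f2) (h3 : Smooth4 f3) (h4 : Smooth4 f4)
    (h5 : Smooth4 f5) {w : E4} {t x y z : ℝ} :
    DD w (fun a b c d => f1 a b c d
        - ((f2 a b c d - c2) * f3 a b c d - (f4 a b c d - c4) * f5 a b c d)) t x y z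
      = DD w f1 t x y z - (DD w f2 t x y z * f3 t x y z + (f2 t x y z - c2) * DD w f3 t x y z
          - (DD w f4 t x y z * f5 t x y z + (f4 t x y z - c4) * DD w f5 t x y z)) := by
  have h2' := h2.sub_const c2
  have h4' := h4.sub_const c4
  have h23 := h2'.mul h3
  have h45 := h4'.mul h5
  rw [DD_sub h1 (h23.sub h45), DD_sub h23 h45, DD_mul h2' h3, DD_mul h4' h5,
      DD_sub_const h2 c2, DD_sub_const h4 c4]

lemma DD_comboE {g1 g2 f2 f3 f4 f5 : ℝ → ℝ → ℝ → ℝ → ℝ} {c2 c4 : ℝ}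
    (hg1 : Smooth4 g1) (hg2 : Smooth4 g2) (h2 : Smooth4 f2) (h3 : Smooth4 f3)
    (h4 : Smooth4 f4) (h5 : Smooth4 f5) {w : E4} {t x y z : ℝ} :
    DD w (fun a b c d => g1 a b c d - g2 a b c d
        - ((f2 a b c d - c2) * f3 a b c d - (f4 a b c d - c4) * f5 a b c d)) t x y z
      = DD w g1 t x y z - DD w g2 t x y z
        - (DD w f2 t x y z * f3 t x y z + (f2 t x y z - c2) * DD w f3 t x y z
          - (DD w f4 t x y z * f5 t x y z + (f4 t x y z - c4) * DD w f5 t x y z)) := by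
  have h2' := h2.sub_const c2
  have h4' := h4.sub_const c4
  have h23 := h2'.mul h3
  have h45 := h4'.mul h5
  rw [DD_sub (hg1.sub hg2) (h23.sub h45), DD_sub hg1 hg2, DD_sub h23 h45, DD_mul h2' h3,
      DD_mul h4' h5, DD_sub_const h2 c2, DD_sub_const h4 c4]

theorem commutator_identity (u v : ℝ → ℝ → ℝ → ℝ → ℝ) (hu : Smooth4 u) (hv : Smooth4 v)
    (lam : ℝ) :
    ∀ t x y z : ℝ,
      opA u lam (opB u lam v) t x y z - opB u lam (opA u lam v) t x y z =
        pY (heavenlyE u) t x y z * pZ v t x y z - pZ (heavenlyE u) t x y z * pY v t x y z := by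
  intro t x y z
  -- conversions of curried partials to directional derivatives
  have hvt : pT v = DD eT v := pT_eq hv
  have hvx : pX v = DD eX v := pX_eq hv
  have hvy : pY v = DD eY v := pY_eq hv
  have hvz : pZ v = DD eZ v := pZ_eq hv
  have huy : pY u = DD eY u := pY_eq hu
  have huz : pZ u = DD eZ u := pZ_eq hu
  have huyy : pY (pY u) = DD eY (DD eY u) := by rw [huy]; exact pY_eq (hu.dd eY)
  have huyz : pY (pZ u) = DD eY (DD eZ u) := by rw [huz]; exact pY_eq (hu.dd eZ)
  have huzz : pZ (pZ u) = DD eZ (DD eZ u) := by rw [huz]; exact pZ_eq (hu.dd eZ)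
  have huxz : pX (pZ u) = DD eX (DD eZ u) := by rw [huz]; exact pX_eq (hu.dd eZ)
  have huty : pT (pY u) = DD eT (DD eY u) := by rw [huy]; exact pT_eq (hu.dd eY)
  -- combo-shaped presentations of the operators and of E
  have hA : opA u lam v = fun a b c d =>
      DD eT v a b c d - ((DD eY (DD eZ u) a b c d - (-lam)) * DD eZ v a b c d
        - (DD eZ (DD eZ u) a b c d - 0) * DD eY v a b c d) := by
    funext a b c d
    simp only [opA, huyz, huzz, hvt, hvy, hvz]
    ring
  have hB : opB u lam v = fun a b c d =>
      DD eX v a b c d - ((DD eY (DD eY u) a b c d - 0) * DD eZ v a b c d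
        - (DD eY (DD eZ u) a b c d - lam) * DD eY v a b c d) := by
    funext a b c d
    simp only [opB, huyy, huyz, hvx, hvy, hvz]
    ring
  have hE : heavenlyE u = fun a b c d =>
      DD eX (DD eZ u) a b c d - DD eT (DD eY u) a b c d
        - ((DD eY (DD eY u) a b c d - 0) * DD eZ (DD eZ u) a b c d
          - (DD eY (DD eZ u) a b c d - 0) * DD eY (DD eZ u) a b c d) := by
    funext a b c d
    simp only [heavenlyE, huxz, huty, huyy, huyz, huzz]
    ring
  -- smoothness of composite operator outputs
  have sA : Smooth4 (opA u lam v) := by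
    rw [hA]
    exact (hv.dd eT).sub (((((hu.dd eZ).dd eY).sub_const (-lam)).mul (hv.dd eZ)).sub
      ((((hu.dd eZ).dd eZ).sub_const 0).mul (hv.dd eY)))
  have sB : Smooth4 (opB u lam v) := by
    rw [hB]
    exact (hv.dd eX).sub (((((hu.dd eY).dd eY).sub_const 0).mul (hv.dd eZ)).sub
      ((((hu.dd eZ).dd eY).sub_const lam).mul (hv.dd eY)))
  have sE : Smooth4 (heavenlyE u) := by
    rw [hE]
    exact ((((hu.dd eZ).dd eX).sub ((hu.dd eY).dd eT)).sub
      (((((hu.dd eY).dd eY).sub_const 0).mul ((hu.dd eZ).dd eZ)).sub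
        ((((hu.dd eZ).dd eY).sub_const 0).mul ((hu.dd eZ).dd eY))))
  -- unfold the outer operator layer only
  have unfoldA : ∀ w' : ℝ → ℝ → ℝ → ℝ → ℝ, opA u lam w' t x y z
      = pT w' t x y z - ((pY (pZ u) t x y z + lam) * pZ w' t x y z
          - pZ (pZ u) t x y z * pY w' t x y z) := fun _ => rfl
  have unfoldB : ∀ w' : ℝ → ℝ → ℝ → ℝ → ℝ, opB u lam w' t x y z
      = pX w' t x y z - (pY (pY u) t x y z * pZ w' t x y z
          - (pY (pZ u) t x y z - lam) * pY w' t x y z) := fun _ => rfl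
  rw [unfoldA (opB u lam v), unfoldB (opA u lam v)]
  rw [pT_eq sB, pZ_eq sB, pY_eq sB, pX_eq sA, pZ_eq sA, pY_eq sA, pY_eq sE, pZ_eq sE,
      hvy, hvz, huyz, huzz, huyy]
  rw [hA, hB, hE]
  simp only [DD_combo (hv.dd eX) ((hu.dd eY).dd eY) (hv.dd eZ) ((hu.dd eZ).dd eY) (hv.dd eY),
    DD_combo (hv.dd eT) ((hu.dd eZ).dd eY) (hv.dd eZ) ((hu.dd eZ).dd eZ) (hv.dd eY),
    DD_comboE ((hu.dd eZ).dd eX) ((hu.dd eY).dd eT) ((hu.dd eY).dd eY) ((hu.dd eZ).dd eZ)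
      ((hu.dd eZ).dd eY) ((hu.dd eZ).dd eY)]
  -- commute derivatives into canonical order
  have c1 : DD eZ (DD eY (DD eY u)) = DD eY (DD eY (DD eZ u)) := by
    rw [DD_comm (hu.dd eY) eZ eY, DD_comm hu eZ eY]
  have c2 : DD eZ (DD eY (DD eZ u)) = DD eY (DD eZ (DD eZ u)) := DD_comm (hu.dd eZ) eZ eY
  have c3 : DD eY (DD eX (DD eZ u)) = DD eX (DD eY (DD eZ u)) := DD_comm (hu.dd eZ) eY eX
  have c4 : DD eY (DD eT (DD eY u)) = DD eT (DD eY (DD eY u)) := DD_comm (hu.dd eY) eY eT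
  have c5 : DD eZ (DD eX (DD eZ u)) = DD eX (DD eZ (DD eZ u)) := DD_comm (hu.dd eZ) eZ eX
  have c6 : DD eZ (DD eT (DD eY u)) = DD eT (DD eY (DD eZ u)) := by
    rw [DD_comm (hu.dd eY) eZ eT, DD_comm hu eZ eY]
  have d1 : DD eZ (DD eX v) = DD eX (DD eZ v) := DD_comm hv eZ eX
  have d2 : DD eY (DD eX v) = DD eX (DD eY v) := DD_comm hv eY eX
  have d3 : DD eZ (DD eY v) = DD eY (DD eZ v) := DD_comm hv eZ eY
  have d4 : DD eX (DD eT v) = DD eT (DD eX v) := DD_comm hv eX eT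
  have d5 : DD eZ (DD eT v) = DD eT (DD eZ v) := DD_comm hv eZ eT
  have d6 : DD eY (DD eT v) = DD eT (DD eY v) := DD_comm hv eY eT
  simp only [c1, c2, c3, c4, c5, c6, d1, d2, d3, d4, d5, d6]
  ring
end

section
/- Let u, v : ℝ⁴ → ℝ be smooth, λ ∈ ℝ, and suppose v satisfies the linear system v_t = (u_{yz}+λ)v_z − u_{zz}v_y and v_x = u_{yy}v_z − (u_{yz}−λ)v_y on all of ℝ⁴. Set E := u_{xz} − u_{ty} − u_{yy}u_{zz} + u_{yz}². Then (∂_y E)·v_z = (∂_z E)·v_y at every point of ℝ⁴. -/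
namespace Heaven

abbrev E4 := ℝ × ℝ × ℝ × ℝ

def L (f : ℝ → ℝ → ℝ → ℝ → ℝ) : E4 → ℝ := fun p => f p.1 p.2.1 p.2.2.1 p.2.2.2

def eT : E4 := (1,0,0,0)
def eX : E4 := (0,1,0,0)
def eY : E4 := (0,0,1,0)
def eZ : E4 := (0,0,0,1)

lemma smooth4_iff (f : ℝ → ℝ → ℝ → ℝ → ℝ) : Smooth4 f ↔ ContDiff ℝ (⊤ : ℕ∞) (L f) := Iff.rfl

lemma hasDerivAt_sliceT (t x y z : ℝ) :
    HasDerivAt (fun s : ℝ => ((s, x, y, z) : E4)) eT t :=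
  (hasDerivAt_id t).prodMk (((hasDerivAt_const t x).prodMk
    ((hasDerivAt_const t y).prodMk (hasDerivAt_const t z))))

lemma hasDerivAt_sliceX (t x y z : ℝ) :
    HasDerivAt (fun s : ℝ => ((t, s, y, z) : E4)) eX x :=
  (hasDerivAt_const x t).prodMk (((hasDerivAt_id x).prodMk
    ((hasDerivAt_const x y).prodMk (hasDerivAt_const x z))))

lemma hasDerivAt_sliceY (t x y z : ℝ) :
    HasDerivAt (fun s : ℝ => ((t, x, s, z) : E4)) eY y :=
  (hasDerivAt_const y t).prodMk (((hasDerivAt_const y x).prodMk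
    ((hasDerivAt_id y).prodMk (hasDerivAt_const y z))))

lemma hasDerivAt_sliceZ (t x y z : ℝ) :
    HasDerivAt (fun s : ℝ => ((t, x, y, s) : E4)) eZ z :=
  (hasDerivAt_const z t).prodMk (((hasDerivAt_const z x).prodMk
    ((hasDerivAt_const z y).prodMk (hasDerivAt_id z))))

/-- directional derivative operator -/
noncomputable def D (w : E4) (F : E4 → ℝ) : E4 → ℝ := fun p => fderiv ℝ F p w

lemma D_smooth {F : E4 → ℝ} (hF : ContDiff ℝ (⊤ : ℕ∞) F) (w : E4) : ContDiff ℝ (⊤ : ℕ∞) (D w F) :=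
  (hF.fderiv_right le_rfl).clm_apply contDiff_const

lemma pT_eq {f : ℝ → ℝ → ℝ → ℝ → ℝ} (hf : Smooth4 f) (t x y z : ℝ) :
    pT f t x y z = D eT (L f) (t, x, y, z) := by
  have h := ((hf.differentiable (by simp)).differentiableAt (x := ((t,x,y,z) : E4))).hasFDerivAt
  exact (h.comp_hasDerivAt t (hasDerivAt_sliceT t x y z)).deriv

lemma pX_eq {f : ℝ → ℝ → ℝ → ℝ → ℝ} (hf : Smooth4 f) (t x y z : ℝ) :
    pX f t x y z = D eX (L f) (t, x, y, z) := by
  have h := ((hf.differentiable (by simp)).differentiableAt (x := ((t,x,y,z) : E4))).hasFDerivAt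
  exact (h.comp_hasDerivAt x (hasDerivAt_sliceX t x y z)).deriv

lemma pY_eq {f : ℝ → ℝ → ℝ → ℝ → ℝ} (hf : Smooth4 f) (t x y z : ℝ) :
    pY f t x y z = D eY (L f) (t, x, y, z) := by
  have h := ((hf.differentiable (by simp)).differentiableAt (x := ((t,x,y,z) : E4))).hasFDerivAt
  exact (h.comp_hasDerivAt y (hasDerivAt_sliceY t x y z)).deriv

lemma pZ_eq {f : ℝ → ℝ → ℝ → ℝ → ℝ} (hf : Smooth4 f) (t x y z : ℝ) :
    pZ f t x y z = D eZ (L f) (t, x, y, z) := by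
  have h := ((hf.differentiable (by simp)).differentiableAt (x := ((t,x,y,z) : E4))).hasFDerivAt
  exact (h.comp_hasDerivAt z (hasDerivAt_sliceZ t x y z)).deriv

lemma L_pT {f} (hf : Smooth4 f) : L (pT f) = D eT (L f) := by
  funext p; exact pT_eq hf p.1 p.2.1 p.2.2.1 p.2.2.2
lemma L_pX {f} (hf : Smooth4 f) : L (pX f) = D eX (L f) := by
  funext p; exact pX_eq hf p.1 p.2.1 p.2.2.1 p.2.2.2
lemma L_pY {f} (hf : Smooth4 f) : L (pY f) = D eY (L f) := by
  funext p; exact pY_eq hf p.1 p.2.1 p.2.2.1 p.2.2.2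
lemma L_pZ {f} (hf : Smooth4 f) : L (pZ f) = D eZ (L f) := by
  funext p; exact pZ_eq hf p.1 p.2.1 p.2.2.1 p.2.2.2

lemma smooth_pT {f} (hf : Smooth4 f) : Smooth4 (pT f) := by
  rw [smooth4_iff] at *; rw [L_pT hf]; exact D_smooth hf eT
lemma smooth_pX {f} (hf : Smooth4 f) : Smooth4 (pX f) := by
  rw [smooth4_iff] at *; rw [L_pX hf]; exact D_smooth hf eX
lemma smooth_pY {f} (hf : Smooth4 f) : Smooth4 (pY f) := by
  rw [smooth4_iff] at *; rw [L_pY hf]; exact D_smooth hf eY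
lemma smooth_pZ {f} (hf : Smooth4 f) : Smooth4 (pZ f) := by
  rw [smooth4_iff] at *; rw [L_pZ hf]; exact D_smooth hf eZ

/-- symmetry of second directional derivatives -/
lemma D_comm {F : E4 → ℝ} (hF : ContDiff ℝ (⊤ : ℕ∞) F) (w1 w2 : E4) :
    D w1 (D w2 F) = D w2 (D w1 F) := by
  funext p
  have hdiff : DifferentiableAt ℝ (fderiv ℝ F) p :=
    ((hF.fderiv_right (m := (⊤ : ℕ∞)) (by simp)).differentiable (by simp)).differentiableAt
  have key : ∀ w1 w2 : E4, D w1 (D w2 F) p = fderiv ℝ (fderiv ℝ F) p w1 w2 := by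
    intro w1 w2
    have h : HasFDerivAt (fun q => fderiv ℝ F q w2)
        ((ContinuousLinearMap.apply ℝ ℝ w2).comp (fderiv ℝ (fderiv ℝ F) p)) p :=
      (ContinuousLinearMap.apply ℝ ℝ w2).hasFDerivAt.comp p hdiff.hasFDerivAt
    show fderiv ℝ (fun q => fderiv ℝ F q w2) p w1 = _
    simpa [D] using congrFun (congrArg DFunLike.coe h.fderiv) w1
  rw [key, key]
  exact (hF.contDiffAt.isSymmSndFDerivAt (by rw [minSmoothness_of_isRCLikeNormedField]; exact WithTop.coe_le_coe.mpr (le_top : (2:ℕ∞) ≤ ⊤))) w1 w2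

end Heaven

namespace Heaven

/-- commutation lemmas -/
lemma pXT {f} (hf : Smooth4 f) : pX (pT f) = pT (pX f) := by
  funext t x y z
  rw [pX_eq (smooth_pT hf), pT_eq (smooth_pX hf), L_pT hf, L_pX hf]
  exact congrFun (D_comm hf eX eT) _

lemma pYT {f} (hf : Smooth4 f) : pY (pT f) = pT (pY f) := by
  funext t x y z
  rw [pY_eq (smooth_pT hf), pT_eq (smooth_pY hf), L_pT hf, L_pY hf]
  exact congrFun (D_comm hf eY eT) _

lemma pZT {f} (hf : Smooth4 f) : pZ (pT f) = pT (pZ f) := by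
  funext t x y z
  rw [pZ_eq (smooth_pT hf), pT_eq (smooth_pZ hf), L_pT hf, L_pZ hf]
  exact congrFun (D_comm hf eZ eT) _

lemma pYX {f} (hf : Smooth4 f) : pY (pX f) = pX (pY f) := by
  funext t x y z
  rw [pY_eq (smooth_pX hf), pX_eq (smooth_pY hf), L_pX hf, L_pY hf]
  exact congrFun (D_comm hf eY eX) _

lemma pZX {f} (hf : Smooth4 f) : pZ (pX f) = pX (pZ f) := by
  funext t x y z
  rw [pZ_eq (smooth_pX hf), pX_eq (smooth_pZ hf), L_pX hf, L_pZ hf]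
  exact congrFun (D_comm hf eZ eX) _

lemma pZY {f} (hf : Smooth4 f) : pZ (pY f) = pY (pZ f) := by
  funext t x y z
  rw [pZ_eq (smooth_pY hf), pY_eq (smooth_pZ hf), L_pY hf, L_pZ hf]
  exact congrFun (D_comm hf eZ eY) _

/-- slice differentiability -/
lemma diffT {f} (hf : Smooth4 f) (t x y z : ℝ) :
    DifferentiableAt ℝ (fun s => f s x y z) t :=
  by have h := ((((hf.differentiable (by simp)) ((t,x,y,z) : E4)).hasFDerivAt.comp_hasDerivAt t
    (hasDerivAt_sliceT t x y z)).differentiableAt); exact h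

lemma diffX {f} (hf : Smooth4 f) (t x y z : ℝ) :
    DifferentiableAt ℝ (fun s => f t s y z) x :=
  by have h := ((((hf.differentiable (by simp)) ((t,x,y,z) : E4)).hasFDerivAt.comp_hasDerivAt x
    (hasDerivAt_sliceX t x y z)).differentiableAt); exact h

lemma diffY {f} (hf : Smooth4 f) (t x y z : ℝ) :
    DifferentiableAt ℝ (fun s => f t x s z) y :=
  by have h := ((((hf.differentiable (by simp)) ((t,x,y,z) : E4)).hasFDerivAt.comp_hasDerivAt y
    (hasDerivAt_sliceY t x y z)).differentiableAt); exact h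

lemma diffZ {f} (hf : Smooth4 f) (t x y z : ℝ) :
    DifferentiableAt ℝ (fun s => f t x y s) z :=
  by have h := ((((hf.differentiable (by simp)) ((t,x,y,z) : E4)).hasFDerivAt.comp_hasDerivAt z
    (hasDerivAt_sliceZ t x y z)).differentiableAt); exact h

/-- derivative combination lemmas -/
lemma deriv_comb1 {F G H K : ℝ → ℝ} {s c : ℝ} (hF : DifferentiableAt ℝ F s)
    (hG : DifferentiableAt ℝ G s) (hH : DifferentiableAt ℝ H s)
    (hK : DifferentiableAt ℝ K s) :
    deriv (fun r => (F r + c) * G r - H r * K r) s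
      = (deriv F s * G s + (F s + c) * deriv G s)
        - (deriv H s * K s + H s * deriv K s) :=
  (((hF.hasDerivAt.add_const c).mul hG.hasDerivAt).sub
    (hH.hasDerivAt.mul hK.hasDerivAt)).deriv

lemma deriv_comb2 {F G H K : ℝ → ℝ} {s c : ℝ} (hF : DifferentiableAt ℝ F s)
    (hG : DifferentiableAt ℝ G s) (hH : DifferentiableAt ℝ H s)
    (hK : DifferentiableAt ℝ K s) :
    deriv (fun r => F r * G r - (H r - c) * K r) s
      = (deriv F s * G s + F s * deriv G s)
        - (deriv H s * K s + (H s - c) * deriv K s) :=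
  ((hF.hasDerivAt.mul hG.hasDerivAt).sub
    ((hH.hasDerivAt.sub_const c).mul hK.hasDerivAt)).deriv

lemma deriv_comb3 {F G H K M : ℝ → ℝ} {s : ℝ} (hF : DifferentiableAt ℝ F s)
    (hG : DifferentiableAt ℝ G s) (hH : DifferentiableAt ℝ H s)
    (hK : DifferentiableAt ℝ K s) (hM : DifferentiableAt ℝ M s) :
    deriv (fun r => F r - G r - H r * K r + M r ^ 2) s
      = deriv F s - deriv G s - (deriv H s * K s + H s * deriv K s)
        + 2 * M s * deriv M s := by
  have h := (((hF.hasDerivAt.sub hG.hasDerivAt).sub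
    (hH.hasDerivAt.mul hK.hasDerivAt)).add (hM.hasDerivAt.pow 2)).deriv
  rw [show (fun r => F r - G r - H r * K r + M r ^ 2) = F - G - H * K + M ^ 2 from rfl, h]; push_cast; ring

end Heaven

open Heaven

theorem linear_covering_compatibility (u v : ℝ → ℝ → ℝ → ℝ → ℝ)
    (hu : Smooth4 u) (hv : Smooth4 v) (lam : ℝ)
    (h1 : ∀ t x y z : ℝ,
      pT v t x y z =
        (pY (pZ u) t x y z + lam) * pZ v t x y z - pZ (pZ u) t x y z * pY v t x y z)
    (h2 : ∀ t x y z : ℝ,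
      pX v t x y z =
        pY (pY u) t x y z * pZ v t x y z - (pY (pZ u) t x y z - lam) * pY v t x y z) :
    ∀ t x y z : ℝ,
      pY (heavenlyE u) t x y z * pZ v t x y z = pZ (heavenlyE u) t x y z * pY v t x y z := by
  intro t x y z
  have sZu := smooth_pZ hu
  have sYu := smooth_pY hu
  have sYZu := smooth_pY sZu
  have sZZu := smooth_pZ sZu
  have sYYu := smooth_pY sYu
  have sXZu := smooth_pX sZu
  have sTYu := smooth_pT sYu
  have sZv := smooth_pZ hv
  have sYv := smooth_pY hv
  -- expansion of pY (heavenlyE u)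
  have hEy : pY (heavenlyE u) t x y z
      = pY (pX (pZ u)) t x y z - pY (pT (pY u)) t x y z
        - (pY (pY (pY u)) t x y z * pZ (pZ u) t x y z
           + pY (pY u) t x y z * pY (pZ (pZ u)) t x y z)
        + 2 * pY (pZ u) t x y z * pY (pY (pZ u)) t x y z :=
    deriv_comb3 (diffY sXZu t x y z) (diffY sTYu t x y z) (diffY sYYu t x y z)
      (diffY sZZu t x y z) (diffY sYZu t x y z)
  rw [pYX sZu, pYT sYu] at hEy
  -- expansion of pZ (heavenlyE u)
  have hEz : pZ (heavenlyE u) t x y z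
      = pZ (pX (pZ u)) t x y z - pZ (pT (pY u)) t x y z
        - (pZ (pY (pY u)) t x y z * pZ (pZ u) t x y z
           + pY (pY u) t x y z * pZ (pZ (pZ u)) t x y z)
        + 2 * pY (pZ u) t x y z * pZ (pY (pZ u)) t x y z :=
    deriv_comb3 (diffZ sXZu t x y z) (diffZ sTYu t x y z) (diffZ sYYu t x y z)
      (diffZ sZZu t x y z) (diffZ sYZu t x y z)
  simp only [pZX sZu, pZT sYu, pZY sYu, pZY hu, pZY sZu] at hEz
  -- rewrite the system as function equalities
  have hTv : pT v = (fun a b c d => (pY (pZ u) a b c d + lam) * pZ v a b c d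
      - pZ (pZ u) a b c d * pY v a b c d) := by
    funext a b c d; exact h1 a b c d
  have hXv : pX v = (fun a b c d => pY (pY u) a b c d * pZ v a b c d
      - (pY (pZ u) a b c d - lam) * pY v a b c d) := by
    funext a b c d; exact h2 a b c d
  -- expansions of mixed derivatives
  have l1 : pX (pT v) t x y z
      = pX (pY (pZ u)) t x y z * pZ v t x y z
          + (pY (pZ u) t x y z + lam) * pX (pZ v) t x y z
        - (pX (pZ (pZ u)) t x y z * pY v t x y z
          + pZ (pZ u) t x y z * pX (pY v) t x y z) := by
    rw [hTv]
    exact deriv_comb1 (diffX sYZu t x y z) (diffX sZv t x y z) (diffX sZZu t x y z)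
      (diffX sYv t x y z)
  have l2 : pX (pZ v) t x y z
      = pY (pY (pZ u)) t x y z * pZ v t x y z
          + pY (pY u) t x y z * pZ (pZ v) t x y z
        - (pY (pZ (pZ u)) t x y z * pY v t x y z
          + (pY (pZ u) t x y z - lam) * pY (pZ v) t x y z) := by
    rw [← pZX hv, hXv]
    have h : pZ (fun a b c d => pY (pY u) a b c d * pZ v a b c d
        - (pY (pZ u) a b c d - lam) * pY v a b c d) t x y z
        = pZ (pY (pY u)) t x y z * pZ v t x y z
            + pY (pY u) t x y z * pZ (pZ v) t x y z
          - (pZ (pY (pZ u)) t x y z * pY v t x y z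
            + (pY (pZ u) t x y z - lam) * pZ (pY v) t x y z) :=
      deriv_comb2 (diffZ sYYu t x y z) (diffZ sZv t x y z) (diffZ sYZu t x y z)
        (diffZ sYv t x y z)
    simp only [pZY sYu, pZY hu, pZY sZu, pZY hv] at h
    exact h
  have l3 : pX (pY v) t x y z
      = pY (pY (pY u)) t x y z * pZ v t x y z
          + pY (pY u) t x y z * pY (pZ v) t x y z
        - (pY (pY (pZ u)) t x y z * pY v t x y z
          + (pY (pZ u) t x y z - lam) * pY (pY v) t x y z) := by
    rw [← pYX hv, hXv]
    exact deriv_comb2 (diffY sYYu t x y z) (diffY sZv t x y z) (diffY sYZu t x y z)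
      (diffY sYv t x y z)
  have r1 : pT (pX v) t x y z
      = pT (pY (pY u)) t x y z * pZ v t x y z
          + pY (pY u) t x y z * pT (pZ v) t x y z
        - (pT (pY (pZ u)) t x y z * pY v t x y z
          + (pY (pZ u) t x y z - lam) * pT (pY v) t x y z) := by
    rw [hXv]
    exact deriv_comb2 (diffT sYYu t x y z) (diffT sZv t x y z) (diffT sYZu t x y z)
      (diffT sYv t x y z)
  have r2 : pT (pZ v) t x y z
      = pY (pZ (pZ u)) t x y z * pZ v t x y z
          + (pY (pZ u) t x y z + lam) * pZ (pZ v) t x y z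
        - (pZ (pZ (pZ u)) t x y z * pY v t x y z
          + pZ (pZ u) t x y z * pY (pZ v) t x y z) := by
    rw [← pZT hv, hTv]
    have h : pZ (fun a b c d => (pY (pZ u) a b c d + lam) * pZ v a b c d
        - pZ (pZ u) a b c d * pY v a b c d) t x y z
        = pZ (pY (pZ u)) t x y z * pZ v t x y z
            + (pY (pZ u) t x y z + lam) * pZ (pZ v) t x y z
          - (pZ (pZ (pZ u)) t x y z * pY v t x y z
            + pZ (pZ u) t x y z * pZ (pY v) t x y z) :=
      deriv_comb1 (diffZ sYZu t x y z) (diffZ sZv t x y z) (diffZ sZZu t x y z)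
        (diffZ sYv t x y z)
    simp only [pZY sZu, pZY hv] at h
    exact h
  have r3 : pT (pY v) t x y z
      = pY (pY (pZ u)) t x y z * pZ v t x y z
          + (pY (pZ u) t x y z + lam) * pY (pZ v) t x y z
        - (pY (pZ (pZ u)) t x y z * pY v t x y z
          + pZ (pZ u) t x y z * pY (pY v) t x y z) := by
    rw [← pYT hv, hTv]
    exact deriv_comb1 (diffY sYZu t x y z) (diffY sZv t x y z) (diffY sZZu t x y z)
      (diffY sYv t x y z)
  have hmix : pX (pT v) t x y z = pT (pX v) t x y z :=
    congrFun (congrFun (congrFun (congrFun (pXT hv) t) x) y) z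
  rw [l1, r1, l2, l3, r2, r3] at hmix
  rw [hEy, hEz]
  linear_combination hmix
end

section
/- Let u, v : ℝ⁴ → ℝ be smooth and suppose v satisfies the nonlinear system v_t = (u_{yz}+v)v_z − u_{zz}v_y and v_x = u_{yy}v_z − (u_{yz}−v)v_y on ℝ⁴ (the spectral parameter is replaced by the unknown v itself). Set E := u_{xz} − u_{ty} − u_{yy}u_{zz} + u_{yz}². Then (∂_y E)·v_z = (∂_z E)·v_y at every point of ℝ⁴. -/
namespace Aux
abbrev R4 := ℝ × ℝ × ℝ × ℝ
def unc (f : ℝ → ℝ → ℝ → ℝ → ℝ) : R4 → ℝ := fun p => f p.1 p.2.1 p.2.2.1 p.2.2.2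
def eT : R4 := (1,0,0,0)
def eX : R4 := (0,1,0,0)
def eY : R4 := (0,0,1,0)
def eZ : R4 := (0,0,0,1)
noncomputable def D (e : R4) (g : R4 → ℝ) : R4 → ℝ := fun p => fderiv ℝ g p e

theorem hasDerivAt_lineT (g : R4 → ℝ) (hg : Differentiable ℝ g) (t x y z : ℝ) :
    HasDerivAt (fun s => g (s, x, y, z)) (D eT g (t,x,y,z)) t := by
  have hL : HasDerivAt (fun s : ℝ => ((s, x, y, z) : R4)) eT t :=
    HasDerivAt.prodMk (hasDerivAt_id t) (HasDerivAt.prodMk (hasDerivAt_const t x)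
      (HasDerivAt.prodMk (hasDerivAt_const t y) (hasDerivAt_const t z)))
  exact (hg (t,x,y,z)).hasFDerivAt.comp_hasDerivAt t hL

theorem hasDerivAt_lineX (g : R4 → ℝ) (hg : Differentiable ℝ g) (t x y z : ℝ) :
    HasDerivAt (fun s => g (t, s, y, z)) (D eX g (t,x,y,z)) x := by
  have hL : HasDerivAt (fun s : ℝ => ((t, s, y, z) : R4)) eX x :=
    HasDerivAt.prodMk (hasDerivAt_const x t) (HasDerivAt.prodMk (hasDerivAt_id x)
      (HasDerivAt.prodMk (hasDerivAt_const x y) (hasDerivAt_const x z)))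
  exact (hg (t,x,y,z)).hasFDerivAt.comp_hasDerivAt x hL

theorem hasDerivAt_lineY (g : R4 → ℝ) (hg : Differentiable ℝ g) (t x y z : ℝ) :
    HasDerivAt (fun s => g (t, x, s, z)) (D eY g (t,x,y,z)) y := by
  have hL : HasDerivAt (fun s : ℝ => ((t, x, s, z) : R4)) eY y :=
    HasDerivAt.prodMk (hasDerivAt_const y t) (HasDerivAt.prodMk (hasDerivAt_const y x)
      (HasDerivAt.prodMk (hasDerivAt_id y) (hasDerivAt_const y z)))
  exact (hg (t,x,y,z)).hasFDerivAt.comp_hasDerivAt y hL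

theorem hasDerivAt_lineZ (g : R4 → ℝ) (hg : Differentiable ℝ g) (t x y z : ℝ) :
    HasDerivAt (fun s => g (t, x, y, s)) (D eZ g (t,x,y,z)) z := by
  have hL : HasDerivAt (fun s : ℝ => ((t, x, y, s) : R4)) eZ z :=
    HasDerivAt.prodMk (hasDerivAt_const z t) (HasDerivAt.prodMk (hasDerivAt_const z x)
      (HasDerivAt.prodMk (hasDerivAt_const z y) (hasDerivAt_id z)))
  exact (hg (t,x,y,z)).hasFDerivAt.comp_hasDerivAt z hL

theorem D_contDiff {g : R4 → ℝ} (hg : ContDiff ℝ (⊤ : ℕ∞) g) (e : R4) : ContDiff ℝ (⊤ : ℕ∞) (D e g) :=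
  (hg.fderiv_right (by simp)).clm_apply contDiff_const

theorem D_comm {g : R4 → ℝ} (hg : ContDiff ℝ (⊤ : ℕ∞) g) (e e' : R4) :
    D e (D e' g) = D e' (D e g) := by
  funext p
  have hdg : Differentiable ℝ (fderiv ℝ g) :=
    (hg.fderiv_right (m := (⊤ : ℕ∞)) (by simp)).differentiable (by simp)
  have hf : ∀ q, HasFDerivAt g (fderiv ℝ g q) q := fun q =>
    (hg.differentiable (by simp) q).hasFDerivAt
  have hx : HasFDerivAt (fderiv ℝ g) (fderiv ℝ (fderiv ℝ g) p) p := (hdg p).hasFDerivAt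
  have key : ∀ a b : R4, fderiv ℝ (fun q => fderiv ℝ g q b) p a
      = fderiv ℝ (fderiv ℝ g) p a b := by
    intro a b
    have h2 : HasFDerivAt (fun q => fderiv ℝ g q b)
        ((ContinuousLinearMap.apply ℝ ℝ b).comp (fderiv ℝ (fderiv ℝ g) p)) p :=
      (ContinuousLinearMap.apply ℝ ℝ b).hasFDerivAt.comp p hx
    rw [h2.fderiv]; rfl
  show fderiv ℝ (fun q => fderiv ℝ g q e') p e = fderiv ℝ (fun q => fderiv ℝ g q e) p e'
  rw [key e e', key e' e]
  exact second_derivative_symmetric hf hx e e'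

theorem unc_pT {f : ℝ → ℝ → ℝ → ℝ → ℝ} (hf : Smooth4 f) : unc (pT f) = D eT (unc f) := by
  funext p
  exact ((hasDerivAt_lineT (unc f) (hf.differentiable (by simp)) p.1 p.2.1 p.2.2.1 p.2.2.2).deriv)

theorem unc_pX {f : ℝ → ℝ → ℝ → ℝ → ℝ} (hf : Smooth4 f) : unc (pX f) = D eX (unc f) := by
  funext p
  exact ((hasDerivAt_lineX (unc f) (hf.differentiable (by simp)) p.1 p.2.1 p.2.2.1 p.2.2.2).deriv)

theorem unc_pY {f : ℝ → ℝ → ℝ → ℝ → ℝ} (hf : Smooth4 f) : unc (pY f) = D eY (unc f) := by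
  funext p
  exact ((hasDerivAt_lineY (unc f) (hf.differentiable (by simp)) p.1 p.2.1 p.2.2.1 p.2.2.2).deriv)

theorem unc_pZ {f : ℝ → ℝ → ℝ → ℝ → ℝ} (hf : Smooth4 f) : unc (pZ f) = D eZ (unc f) := by
  funext p
  exact ((hasDerivAt_lineZ (unc f) (hf.differentiable (by simp)) p.1 p.2.1 p.2.2.1 p.2.2.2).deriv)

theorem smooth_pT {f} (hf : Smooth4 f) : Smooth4 (pT f) := by
  show ContDiff ℝ (⊤ : ℕ∞) (unc (pT f)); rw [unc_pT hf]; exact D_contDiff hf eT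
theorem smooth_pX {f} (hf : Smooth4 f) : Smooth4 (pX f) := by
  show ContDiff ℝ (⊤ : ℕ∞) (unc (pX f)); rw [unc_pX hf]; exact D_contDiff hf eX
theorem smooth_pY {f} (hf : Smooth4 f) : Smooth4 (pY f) := by
  show ContDiff ℝ (⊤ : ℕ∞) (unc (pY f)); rw [unc_pY hf]; exact D_contDiff hf eY
theorem smooth_pZ {f} (hf : Smooth4 f) : Smooth4 (pZ f) := by
  show ContDiff ℝ (⊤ : ℕ∞) (unc (pZ f)); rw [unc_pZ hf]; exact D_contDiff hf eZ

theorem unc_eq {f g : ℝ → ℝ → ℝ → ℝ → ℝ} (h : unc f = unc g) : f = g := by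
  funext t x y z
  exact congrFun h (t,x,y,z)

theorem comm_TX {f} (hf : Smooth4 f) : pT (pX f) = pX (pT f) := by
  apply unc_eq
  rw [unc_pT (smooth_pX hf), unc_pX hf, unc_pX (smooth_pT hf), unc_pT hf]; exact D_comm hf _ _
theorem comm_TY {f} (hf : Smooth4 f) : pT (pY f) = pY (pT f) := by
  apply unc_eq
  rw [unc_pT (smooth_pY hf), unc_pY hf, unc_pY (smooth_pT hf), unc_pT hf]; exact D_comm hf _ _
theorem comm_TZ {f} (hf : Smooth4 f) : pT (pZ f) = pZ (pT f) := by
  apply unc_eq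
  rw [unc_pT (smooth_pZ hf), unc_pZ hf, unc_pZ (smooth_pT hf), unc_pT hf]; exact D_comm hf _ _
theorem comm_XY {f} (hf : Smooth4 f) : pX (pY f) = pY (pX f) := by
  apply unc_eq
  rw [unc_pX (smooth_pY hf), unc_pY hf, unc_pY (smooth_pX hf), unc_pX hf]; exact D_comm hf _ _
theorem comm_XZ {f} (hf : Smooth4 f) : pX (pZ f) = pZ (pX f) := by
  apply unc_eq
  rw [unc_pX (smooth_pZ hf), unc_pZ hf, unc_pZ (smooth_pX hf), unc_pX hf]; exact D_comm hf _ _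
theorem comm_YZ {f} (hf : Smooth4 f) : pY (pZ f) = pZ (pY f) := by
  apply unc_eq
  rw [unc_pY (smooth_pZ hf), unc_pZ hf, unc_pZ (smooth_pY hf), unc_pY hf]; exact D_comm hf _ _

theorem hasDerivAt_pT {f} (hf : Smooth4 f) (t x y z : ℝ) :
    HasDerivAt (fun s => f s x y z) (pT f t x y z) t := by
  have h := hasDerivAt_lineT (unc f) (hf.differentiable (by simp)) t x y z
  have e : pT f t x y z = D eT (unc f) (t,x,y,z) := congrFun (unc_pT hf) (t,x,y,z)
  rw [e]; exact h
theorem hasDerivAt_pX {f} (hf : Smooth4 f) (t x y z : ℝ) :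
    HasDerivAt (fun s => f t s y z) (pX f t x y z) x := by
  have h := hasDerivAt_lineX (unc f) (hf.differentiable (by simp)) t x y z
  have e : pX f t x y z = D eX (unc f) (t,x,y,z) := congrFun (unc_pX hf) (t,x,y,z)
  rw [e]; exact h
theorem hasDerivAt_pY {f} (hf : Smooth4 f) (t x y z : ℝ) :
    HasDerivAt (fun s => f t x s z) (pY f t x y z) y := by
  have h := hasDerivAt_lineY (unc f) (hf.differentiable (by simp)) t x y z
  have e : pY f t x y z = D eY (unc f) (t,x,y,z) := congrFun (unc_pY hf) (t,x,y,z)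
  rw [e]; exact h
theorem hasDerivAt_pZ {f} (hf : Smooth4 f) (t x y z : ℝ) :
    HasDerivAt (fun s => f t x y s) (pZ f t x y z) z := by
  have h := hasDerivAt_lineZ (unc f) (hf.differentiable (by simp)) t x y z
  have e : pZ f t x y z = D eZ (unc f) (t,x,y,z) := congrFun (unc_pZ hf) (t,x,y,z)
  rw [e]; exact h

end Aux
open Aux

theorem nonlinear_covering_compatibility (u v : ℝ → ℝ → ℝ → ℝ → ℝ)
    (hu : Smooth4 u) (hv : Smooth4 v)
    (h1 : ∀ t x y z : ℝ,
      pT v t x y z =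
        (pY (pZ u) t x y z + v t x y z) * pZ v t x y z - pZ (pZ u) t x y z * pY v t x y z)
    (h2 : ∀ t x y z : ℝ,
      pX v t x y z =
        pY (pY u) t x y z * pZ v t x y z - (pY (pZ u) t x y z - v t x y z) * pY v t x y z) :
    ∀ t x y z : ℝ,
      pY (heavenlyE u) t x y z * pZ v t x y z = pZ (heavenlyE u) t x y z * pY v t x y z := by
  intro t x y z
  -- smoothness of everything
  have suY : Smooth4 (pY u) := smooth_pY hu
  have suZ : Smooth4 (pZ u) := smooth_pZ hu
  have suYY : Smooth4 (pY (pY u)) := smooth_pY suY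
  have suYZ : Smooth4 (pY (pZ u)) := smooth_pY suZ
  have suZZ : Smooth4 (pZ (pZ u)) := smooth_pZ suZ
  have suTY : Smooth4 (pT (pY u)) := smooth_pT suY
  have suXZ : Smooth4 (pX (pZ u)) := smooth_pX suZ
  have svY : Smooth4 (pY v) := smooth_pY hv
  have svZ : Smooth4 (pZ v) := smooth_pZ hv
  -- ∂y of h1
  have hTY : pY (pT v) t x y z =
      ((pY (pY (pZ u)) t x y z + pY v t x y z) * pZ v t x y z
        + (pY (pZ u) t x y z + v t x y z) * pY (pZ v) t x y z)
      - (pY (pZ (pZ u)) t x y z * pY v t x y z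
        + pZ (pZ u) t x y z * pY (pY v) t x y z) := by
    have e : (fun s => pT v t x s z) = (fun s =>
        (pY (pZ u) t x s z + v t x s z) * pZ v t x s z
          - pZ (pZ u) t x s z * pY v t x s z) := funext fun s => h1 t x s z
    show deriv (fun s => pT v t x s z) y = _
    rw [e]
    exact ((((hasDerivAt_pY suYZ t x y z).add (hasDerivAt_pY hv t x y z)).mul
      (hasDerivAt_pY svZ t x y z)).sub
      ((hasDerivAt_pY suZZ t x y z).mul (hasDerivAt_pY svY t x y z))).deriv
  -- ∂z of h1
  have hTZ : pZ (pT v) t x y z =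
      ((pZ (pY (pZ u)) t x y z + pZ v t x y z) * pZ v t x y z
        + (pY (pZ u) t x y z + v t x y z) * pZ (pZ v) t x y z)
      - (pZ (pZ (pZ u)) t x y z * pY v t x y z
        + pZ (pZ u) t x y z * pZ (pY v) t x y z) := by
    have e : (fun s => pT v t x y s) = (fun s =>
        (pY (pZ u) t x y s + v t x y s) * pZ v t x y s
          - pZ (pZ u) t x y s * pY v t x y s) := funext fun s => h1 t x y s
    show deriv (fun s => pT v t x y s) z = _
    rw [e]
    exact ((((hasDerivAt_pZ suYZ t x y z).add (hasDerivAt_pZ hv t x y z)).mul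
      (hasDerivAt_pZ svZ t x y z)).sub
      ((hasDerivAt_pZ suZZ t x y z).mul (hasDerivAt_pZ svY t x y z))).deriv
  -- ∂x of h1
  have hTX : pX (pT v) t x y z =
      ((pX (pY (pZ u)) t x y z + pX v t x y z) * pZ v t x y z
        + (pY (pZ u) t x y z + v t x y z) * pX (pZ v) t x y z)
      - (pX (pZ (pZ u)) t x y z * pY v t x y z
        + pZ (pZ u) t x y z * pX (pY v) t x y z) := by
    have e : (fun s => pT v t s y z) = (fun s =>
        (pY (pZ u) t s y z + v t s y z) * pZ v t s y z
          - pZ (pZ u) t s y z * pY v t s y z) := funext fun s => h1 t s y z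
    show deriv (fun s => pT v t s y z) x = _
    rw [e]
    exact ((((hasDerivAt_pX suYZ t x y z).add (hasDerivAt_pX hv t x y z)).mul
      (hasDerivAt_pX svZ t x y z)).sub
      ((hasDerivAt_pX suZZ t x y z).mul (hasDerivAt_pX svY t x y z))).deriv
  -- ∂y of h2
  have hXY : pY (pX v) t x y z =
      (pY (pY (pY u)) t x y z * pZ v t x y z
        + pY (pY u) t x y z * pY (pZ v) t x y z)
      - ((pY (pY (pZ u)) t x y z - pY v t x y z) * pY v t x y z
        + (pY (pZ u) t x y z - v t x y z) * pY (pY v) t x y z) := by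
    have e : (fun s => pX v t x s z) = (fun s =>
        pY (pY u) t x s z * pZ v t x s z
          - (pY (pZ u) t x s z - v t x s z) * pY v t x s z) := funext fun s => h2 t x s z
    show deriv (fun s => pX v t x s z) y = _
    rw [e]
    exact (((hasDerivAt_pY suYY t x y z).mul (hasDerivAt_pY svZ t x y z)).sub
      ((((hasDerivAt_pY suYZ t x y z).sub (hasDerivAt_pY hv t x y z))).mul
        (hasDerivAt_pY svY t x y z))).deriv
  -- ∂z of h2
  have hXZ : pZ (pX v) t x y z =
      (pZ (pY (pY u)) t x y z * pZ v t x y z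
        + pY (pY u) t x y z * pZ (pZ v) t x y z)
      - ((pZ (pY (pZ u)) t x y z - pZ v t x y z) * pY v t x y z
        + (pY (pZ u) t x y z - v t x y z) * pZ (pY v) t x y z) := by
    have e : (fun s => pX v t x y s) = (fun s =>
        pY (pY u) t x y s * pZ v t x y s
          - (pY (pZ u) t x y s - v t x y s) * pY v t x y s) := funext fun s => h2 t x y s
    show deriv (fun s => pX v t x y s) z = _
    rw [e]
    exact (((hasDerivAt_pZ suYY t x y z).mul (hasDerivAt_pZ svZ t x y z)).sub
      ((((hasDerivAt_pZ suYZ t x y z).sub (hasDerivAt_pZ hv t x y z))).mul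
        (hasDerivAt_pZ svY t x y z))).deriv
  -- ∂t of h2
  have hXT : pT (pX v) t x y z =
      (pT (pY (pY u)) t x y z * pZ v t x y z
        + pY (pY u) t x y z * pT (pZ v) t x y z)
      - ((pT (pY (pZ u)) t x y z - pT v t x y z) * pY v t x y z
        + (pY (pZ u) t x y z - v t x y z) * pT (pY v) t x y z) := by
    have e : (fun s => pX v s x y z) = (fun s =>
        pY (pY u) s x y z * pZ v s x y z
          - (pY (pZ u) s x y z - v s x y z) * pY v s x y z) := funext fun s => h2 s x y z
    show deriv (fun s => pX v s x y z) t = _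
    rw [e]
    exact (((hasDerivAt_pT suYY t x y z).mul (hasDerivAt_pT svZ t x y z)).sub
      ((((hasDerivAt_pT suYZ t x y z).sub (hasDerivAt_pT hv t x y z))).mul
        (hasDerivAt_pT svY t x y z))).deriv
  -- ∂y of heavenlyE
  have hEY : pY (heavenlyE u) t x y z =
      ((pY (pX (pZ u)) t x y z - pY (pT (pY u)) t x y z)
        - (pY (pY (pY u)) t x y z * pZ (pZ u) t x y z
          + pY (pY u) t x y z * pY (pZ (pZ u)) t x y z))
      + (pY (pY (pZ u)) t x y z * pY (pZ u) t x y z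
          + pY (pZ u) t x y z * pY (pY (pZ u)) t x y z) := by
    have e : (fun s => heavenlyE u t x s z) = (fun s =>
        ((pX (pZ u) t x s z - pT (pY u) t x s z)
          - pY (pY u) t x s z * pZ (pZ u) t x s z)
        + pY (pZ u) t x s z * pY (pZ u) t x s z) := by
      funext s; simp only [heavenlyE]; ring
    show deriv (fun s => heavenlyE u t x s z) y = _
    rw [e]
    exact ((((hasDerivAt_pY suXZ t x y z).sub (hasDerivAt_pY suTY t x y z)).sub
      ((hasDerivAt_pY suYY t x y z).mul (hasDerivAt_pY suZZ t x y z))).add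
      ((hasDerivAt_pY suYZ t x y z).mul (hasDerivAt_pY suYZ t x y z))).deriv
  -- ∂z of heavenlyE
  have hEZ : pZ (heavenlyE u) t x y z =
      ((pZ (pX (pZ u)) t x y z - pZ (pT (pY u)) t x y z)
        - (pZ (pY (pY u)) t x y z * pZ (pZ u) t x y z
          + pY (pY u) t x y z * pZ (pZ (pZ u)) t x y z))
      + (pZ (pY (pZ u)) t x y z * pY (pZ u) t x y z
          + pY (pZ u) t x y z * pZ (pY (pZ u)) t x y z) := by
    have e : (fun s => heavenlyE u t x y s) = (fun s =>
        ((pX (pZ u) t x y s - pT (pY u) t x y s)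
          - pY (pY u) t x y s * pZ (pZ u) t x y s)
        + pY (pZ u) t x y s * pY (pZ u) t x y s) := by
      funext s; simp only [heavenlyE]; ring
    show deriv (fun s => heavenlyE u t x y s) z = _
    rw [e]
    exact ((((hasDerivAt_pZ suXZ t x y z).sub (hasDerivAt_pZ suTY t x y z)).sub
      ((hasDerivAt_pZ suYY t x y z).mul (hasDerivAt_pZ suZZ t x y z))).add
      ((hasDerivAt_pZ suYZ t x y z).mul (hasDerivAt_pZ suYZ t x y z))).deriv
  -- key: v_tx = v_xt
  have hkey : pX (pT v) t x y z = pT (pX v) t x y z := by rw [← comm_TX hv]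
  rw [hTX, hXT] at hkey
  rw [comm_XZ hv, comm_XY hv, hXZ, hXY] at hkey
  rw [comm_TZ hv, comm_TY hv, hTZ, hTY] at hkey
  rw [h1 t x y z, h2 t x y z] at hkey
  -- canonicalize mixed derivatives in hkey
  rw [← comm_YZ hv] at hkey
  rw [← comm_YZ (smooth_pY hu), comm_YZ (smooth_pZ hu), ← comm_YZ hu] at hkey
  -- goal
  rw [hEY, hEZ]
  rw [← comm_XY suZ, ← comm_TY suY, comm_YZ suZ, ← comm_XZ suZ,
     ← comm_TZ suY, ← comm_YZ suY, ← comm_YZ hu]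
  linear_combination hkey
end

section
/- Let u : ℝ⁴ → ℝ be smooth and E := u_{xz} − u_{ty} − u_{yy}u_{zz} + u_{yz}². Suppose v, w : ℝ⁴ → ℝ are smooth solutions of the linear covering system v_t = (u_{yz}+λ)v_z − u_{zz}v_y, v_x = u_{yy}v_z − (u_{yz}−λ)v_y (with parameters λ and μ respectively for v and w). If at a point p ∈ ℝ⁴ the vectors (v_y(p), v_z(p)) and (w_y(p), w_z(p)) are linearly independent in ℝ², then ∂_y E(p) = 0 and ∂_z E(p) = 0. -/
namespace Heav

abbrev E4 : Type := ℝ × ℝ × ℝ × ℝ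

def unc (f : ℝ → ℝ → ℝ → ℝ → ℝ) : E4 → ℝ := fun p => f p.1 p.2.1 p.2.2.1 p.2.2.2

def eT : E4 := (1, 0, 0, 0)
def eX : E4 := (0, 1, 0, 0)
def eY : E4 := (0, 0, 1, 0)
def eZ : E4 := (0, 0, 0, 1)

lemma _root_.Smooth4.unc' {f : ℝ → ℝ → ℝ → ℝ → ℝ} (hf : Smooth4 f) : ContDiff ℝ (⊤ : ℕ∞) (unc f) := hf

variable {M : Type*} [NormedAddCommGroup M] [NormedSpace ℝ M]

lemma hasDerivAt_along_T {F : E4 → M} {t x y z : ℝ} (hF : DifferentiableAt ℝ F (t, x, y, z)) :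
    HasDerivAt (fun s => F (s, x, y, z)) (fderiv ℝ F (t, x, y, z) eT) t := by
  have hc : HasDerivAt (fun s : ℝ => ((s, x, y, z) : E4)) eT t := by
    have := (hasDerivAt_id t).prodMk ((hasDerivAt_const t x).prodMk
      ((hasDerivAt_const t y).prodMk (hasDerivAt_const t z)))
    simpa [eT] using this
  exact hF.hasFDerivAt.comp_hasDerivAt t hc

lemma hasDerivAt_along_X {F : E4 → M} {t x y z : ℝ} (hF : DifferentiableAt ℝ F (t, x, y, z)) :
    HasDerivAt (fun s => F (t, s, y, z)) (fderiv ℝ F (t, x, y, z) eX) x := by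
  have hc : HasDerivAt (fun s : ℝ => ((t, s, y, z) : E4)) eX x := by
    have := (hasDerivAt_const x t).prodMk ((hasDerivAt_id x).prodMk
      ((hasDerivAt_const x y).prodMk (hasDerivAt_const x z)))
    simpa [eX] using this
  exact hF.hasFDerivAt.comp_hasDerivAt x hc

lemma hasDerivAt_along_Y {F : E4 → M} {t x y z : ℝ} (hF : DifferentiableAt ℝ F (t, x, y, z)) :
    HasDerivAt (fun s => F (t, x, s, z)) (fderiv ℝ F (t, x, y, z) eY) y := by
  have hc : HasDerivAt (fun s : ℝ => ((t, x, s, z) : E4)) eY y := by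
    have := (hasDerivAt_const y t).prodMk ((hasDerivAt_const y x).prodMk
      ((hasDerivAt_id y).prodMk (hasDerivAt_const y z)))
    simpa [eY] using this
  exact hF.hasFDerivAt.comp_hasDerivAt y hc

lemma hasDerivAt_along_Z {F : E4 → M} {t x y z : ℝ} (hF : DifferentiableAt ℝ F (t, x, y, z)) :
    HasDerivAt (fun s => F (t, x, y, s)) (fderiv ℝ F (t, x, y, z) eZ) z := by
  have hc : HasDerivAt (fun s : ℝ => ((t, x, y, s) : E4)) eZ z := by
    have := (hasDerivAt_const z t).prodMk ((hasDerivAt_const z x).prodMk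
      ((hasDerivAt_const z y).prodMk (hasDerivAt_id z)))
    simpa [eZ] using this
  exact hF.hasFDerivAt.comp_hasDerivAt z hc

variable {f : ℝ → ℝ → ℝ → ℝ → ℝ}

lemma pT_fd (hf : Smooth4 f) (t x y z : ℝ) :
    pT f t x y z = fderiv ℝ (unc f) (t, x, y, z) eT := by
  show deriv (fun s => f s x y z) t = _
  exact (hasDerivAt_along_T (F := unc f) ((hf.unc'.differentiable (by simp)).differentiableAt)).deriv

lemma pX_fd (hf : Smooth4 f) (t x y z : ℝ) :
    pX f t x y z = fderiv ℝ (unc f) (t, x, y, z) eX := by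
  show deriv (fun s => f t s y z) x = _
  exact (hasDerivAt_along_X (F := unc f) ((hf.unc'.differentiable (by simp)).differentiableAt)).deriv

lemma pY_fd (hf : Smooth4 f) (t x y z : ℝ) :
    pY f t x y z = fderiv ℝ (unc f) (t, x, y, z) eY := by
  show deriv (fun s => f t x s z) y = _
  exact (hasDerivAt_along_Y (F := unc f) ((hf.unc'.differentiable (by simp)).differentiableAt)).deriv

lemma pZ_fd (hf : Smooth4 f) (t x y z : ℝ) :
    pZ f t x y z = fderiv ℝ (unc f) (t, x, y, z) eZ := by
  show deriv (fun s => f t x y s) z = _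
  exact (hasDerivAt_along_Z (F := unc f) ((hf.unc'.differentiable (by simp)).differentiableAt)).deriv

lemma hasDerivAt_pT (hf : Smooth4 f) (t x y z : ℝ) :
    HasDerivAt (fun s => f s x y z) (pT f t x y z) t := by
  rw [pT_fd hf]
  exact hasDerivAt_along_T (F := unc f) ((hf.unc'.differentiable (by simp)).differentiableAt)

lemma hasDerivAt_pX (hf : Smooth4 f) (t x y z : ℝ) :
    HasDerivAt (fun s => f t s y z) (pX f t x y z) x := by
  rw [pX_fd hf]
  exact hasDerivAt_along_X (F := unc f) ((hf.unc'.differentiable (by simp)).differentiableAt)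

lemma hasDerivAt_pY (hf : Smooth4 f) (t x y z : ℝ) :
    HasDerivAt (fun s => f t x s z) (pY f t x y z) y := by
  rw [pY_fd hf]
  exact hasDerivAt_along_Y (F := unc f) ((hf.unc'.differentiable (by simp)).differentiableAt)

lemma hasDerivAt_pZ (hf : Smooth4 f) (t x y z : ℝ) :
    HasDerivAt (fun s => f t x y s) (pZ f t x y z) z := by
  rw [pZ_fd hf]
  exact hasDerivAt_along_Z (F := unc f) ((hf.unc'.differentiable (by simp)).differentiableAt)

lemma _root_.Smooth4.pT' (hf : Smooth4 f) : Smooth4 (pT f) := by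
  have h : unc (pT f) = fun p => fderiv ℝ (unc f) p eT := by
    funext p; exact pT_fd hf p.1 p.2.1 p.2.2.1 p.2.2.2
  show ContDiff ℝ (⊤ : ℕ∞) (unc (pT f))
  rw [h]
  exact (hf.unc'.fderiv_right (by simp)).clm_apply contDiff_const

lemma _root_.Smooth4.pX' (hf : Smooth4 f) : Smooth4 (pX f) := by
  have h : unc (pX f) = fun p => fderiv ℝ (unc f) p eX := by
    funext p; exact pX_fd hf p.1 p.2.1 p.2.2.1 p.2.2.2
  show ContDiff ℝ (⊤ : ℕ∞) (unc (pX f))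
  rw [h]
  exact (hf.unc'.fderiv_right (by simp)).clm_apply contDiff_const

lemma _root_.Smooth4.pY' (hf : Smooth4 f) : Smooth4 (pY f) := by
  have h : unc (pY f) = fun p => fderiv ℝ (unc f) p eY := by
    funext p; exact pY_fd hf p.1 p.2.1 p.2.2.1 p.2.2.2
  show ContDiff ℝ (⊤ : ℕ∞) (unc (pY f))
  rw [h]
  exact (hf.unc'.fderiv_right (by simp)).clm_apply contDiff_const

lemma _root_.Smooth4.pZ' (hf : Smooth4 f) : Smooth4 (pZ f) := by
  have h : unc (pZ f) = fun p => fderiv ℝ (unc f) p eZ := by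
    funext p; exact pZ_fd hf p.1 p.2.1 p.2.2.1 p.2.2.2
  show ContDiff ℝ (⊤ : ℕ∞) (unc (pZ f))
  rw [h]
  exact (hf.unc'.fderiv_right (by simp)).clm_apply contDiff_const

lemma sym2 (hf : Smooth4 f) (p : E4) (a b : E4) :
    fderiv ℝ (fderiv ℝ (unc f)) p a b = fderiv ℝ (fderiv ℝ (unc f)) p b a :=
  (hf.unc'.contDiffAt.isSymmSndFDerivAt (by rw [minSmoothness_of_isRCLikeNormedField]; exact WithTop.coe_le_coe.mpr le_top)) a b

lemma pT_comp_fd (hf : Smooth4 f) {g : ℝ → ℝ → ℝ → ℝ → ℝ} {w : E4}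
    (hg : ∀ t x y z, g t x y z = fderiv ℝ (unc f) (t, x, y, z) w) (t x y z : ℝ) :
    pT g t x y z = fderiv ℝ (fderiv ℝ (unc f)) (t, x, y, z) eT w := by
  have hG : ContDiff ℝ (⊤ : ℕ∞) (fderiv ℝ (unc f)) := hf.unc'.fderiv_right (by simp)
  have hd : DifferentiableAt ℝ (fun p : E4 => fderiv ℝ (unc f) p w) (t, x, y, z) :=
    ((hG.clm_apply contDiff_const).differentiable (by simp)).differentiableAt
  have hfun : (fun s => g s x y z) = fun s => (fun p : E4 => fderiv ℝ (unc f) p w) (s, x, y, z) := by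
    funext s; exact hg s x y z
  have h1 : pT g t x y z = fderiv ℝ (fun p : E4 => fderiv ℝ (unc f) p w) (t, x, y, z) eT := by
    show deriv (fun s => g s x y z) t = _
    rw [hfun]
    exact (hasDerivAt_along_T hd).deriv
  rw [h1, fderiv_clm_apply ((hG.differentiable (by simp)).differentiableAt) (differentiableAt_const w)]
  simp

lemma pX_comp_fd (hf : Smooth4 f) {g : ℝ → ℝ → ℝ → ℝ → ℝ} {w : E4}
    (hg : ∀ t x y z, g t x y z = fderiv ℝ (unc f) (t, x, y, z) w) (t x y z : ℝ) :
    pX g t x y z = fderiv ℝ (fderiv ℝ (unc f)) (t, x, y, z) eX w := by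
  have hG : ContDiff ℝ (⊤ : ℕ∞) (fderiv ℝ (unc f)) := hf.unc'.fderiv_right (by simp)
  have hd : DifferentiableAt ℝ (fun p : E4 => fderiv ℝ (unc f) p w) (t, x, y, z) :=
    ((hG.clm_apply contDiff_const).differentiable (by simp)).differentiableAt
  have hfun : (fun s => g t s y z) = fun s => (fun p : E4 => fderiv ℝ (unc f) p w) (t, s, y, z) := by
    funext s; exact hg t s y z
  have h1 : pX g t x y z = fderiv ℝ (fun p : E4 => fderiv ℝ (unc f) p w) (t, x, y, z) eX := by
    show deriv (fun s => g t s y z) x = _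
    rw [hfun]
    exact (hasDerivAt_along_X hd).deriv
  rw [h1, fderiv_clm_apply ((hG.differentiable (by simp)).differentiableAt) (differentiableAt_const w)]
  simp

lemma pY_comp_fd (hf : Smooth4 f) {g : ℝ → ℝ → ℝ → ℝ → ℝ} {w : E4}
    (hg : ∀ t x y z, g t x y z = fderiv ℝ (unc f) (t, x, y, z) w) (t x y z : ℝ) :
    pY g t x y z = fderiv ℝ (fderiv ℝ (unc f)) (t, x, y, z) eY w := by
  have hG : ContDiff ℝ (⊤ : ℕ∞) (fderiv ℝ (unc f)) := hf.unc'.fderiv_right (by simp)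
  have hd : DifferentiableAt ℝ (fun p : E4 => fderiv ℝ (unc f) p w) (t, x, y, z) :=
    ((hG.clm_apply contDiff_const).differentiable (by simp)).differentiableAt
  have hfun : (fun s => g t x s z) = fun s => (fun p : E4 => fderiv ℝ (unc f) p w) (t, x, s, z) := by
    funext s; exact hg t x s z
  have h1 : pY g t x y z = fderiv ℝ (fun p : E4 => fderiv ℝ (unc f) p w) (t, x, y, z) eY := by
    show deriv (fun s => g t x s z) y = _
    rw [hfun]
    exact (hasDerivAt_along_Y hd).deriv
  rw [h1, fderiv_clm_apply ((hG.differentiable (by simp)).differentiableAt) (differentiableAt_const w)]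
  simp

lemma pZ_comp_fd (hf : Smooth4 f) {g : ℝ → ℝ → ℝ → ℝ → ℝ} {w : E4}
    (hg : ∀ t x y z, g t x y z = fderiv ℝ (unc f) (t, x, y, z) w) (t x y z : ℝ) :
    pZ g t x y z = fderiv ℝ (fderiv ℝ (unc f)) (t, x, y, z) eZ w := by
  have hG : ContDiff ℝ (⊤ : ℕ∞) (fderiv ℝ (unc f)) := hf.unc'.fderiv_right (by simp)
  have hd : DifferentiableAt ℝ (fun p : E4 => fderiv ℝ (unc f) p w) (t, x, y, z) :=
    ((hG.clm_apply contDiff_const).differentiable (by simp)).differentiableAt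
  have hfun : (fun s => g t x y s) = fun s => (fun p : E4 => fderiv ℝ (unc f) p w) (t, x, y, s) := by
    funext s; exact hg t x y s
  have h1 : pZ g t x y z = fderiv ℝ (fun p : E4 => fderiv ℝ (unc f) p w) (t, x, y, z) eZ := by
    show deriv (fun s => g t x y s) z = _
    rw [hfun]
    exact (hasDerivAt_along_Z hd).deriv
  rw [h1, fderiv_clm_apply ((hG.differentiable (by simp)).differentiableAt) (differentiableAt_const w)]
  simp

lemma swapTX (hf : Smooth4 f) (t x y z : ℝ) : pX (pT f) t x y z = pT (pX f) t x y z := by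
  rw [pX_comp_fd hf (pT_fd hf), pT_comp_fd hf (pX_fd hf)]; exact sym2 hf _ _ _

lemma swapTY (hf : Smooth4 f) (t x y z : ℝ) : pT (pY f) t x y z = pY (pT f) t x y z := by
  rw [pT_comp_fd hf (pY_fd hf), pY_comp_fd hf (pT_fd hf)]; exact sym2 hf _ _ _

lemma swapTZ (hf : Smooth4 f) (t x y z : ℝ) : pT (pZ f) t x y z = pZ (pT f) t x y z := by
  rw [pT_comp_fd hf (pZ_fd hf), pZ_comp_fd hf (pT_fd hf)]; exact sym2 hf _ _ _

lemma swapXY (hf : Smooth4 f) (t x y z : ℝ) : pX (pY f) t x y z = pY (pX f) t x y z := by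
  rw [pX_comp_fd hf (pY_fd hf), pY_comp_fd hf (pX_fd hf)]; exact sym2 hf _ _ _

lemma swapXZ (hf : Smooth4 f) (t x y z : ℝ) : pX (pZ f) t x y z = pZ (pX f) t x y z := by
  rw [pX_comp_fd hf (pZ_fd hf), pZ_comp_fd hf (pX_fd hf)]; exact sym2 hf _ _ _

lemma swapYZ (hf : Smooth4 f) (t x y z : ℝ) : pY (pZ f) t x y z = pZ (pY f) t x y z := by
  rw [pY_comp_fd hf (pZ_fd hf), pZ_comp_fd hf (pY_fd hf)]; exact sym2 hf _ _ _


lemma key (u v : ℝ → ℝ → ℝ → ℝ → ℝ) (hu : Smooth4 u) (hv : Smooth4 v) (lam : ℝ)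
    (hv1 : ∀ t x y z : ℝ,
      pT v t x y z =
        (pY (pZ u) t x y z + lam) * pZ v t x y z - pZ (pZ u) t x y z * pY v t x y z)
    (hv2 : ∀ t x y z : ℝ,
      pX v t x y z =
        pY (pY u) t x y z * pZ v t x y z - (pY (pZ u) t x y z - lam) * pY v t x y z)
    (t x y z : ℝ) :
    pY (heavenlyE u) t x y z * pZ v t x y z - pZ (heavenlyE u) t x y z * pY v t x y z = 0 := by
  have hsZu := hu.pZ'
  have hsYu := hu.pY'
  have hsa := hsZu.pY'
  have hsb := hsZu.pZ'
  have hsc := hsYu.pY'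
  have hsXZu := hsZu.pX'
  have hsTYu := hsYu.pT'
  have hsv1 := hv.pY'
  have hsv2 := hv.pZ'
  have hfe : pY (pZ u) = pZ (pY u) := by
    funext t x y z; exact swapYZ hu t x y z
  have s1 : pX (pY (pZ u)) t x y z = pY (pX (pZ u)) t x y z := swapXY hsZu t x y z
  have s2 : pX (pZ (pZ u)) t x y z = pZ (pX (pZ u)) t x y z := swapXZ hsZu t x y z
  have s3 : pT (pY (pY u)) t x y z = pY (pT (pY u)) t x y z := swapTY hsYu t x y z
  have s4 : pT (pY (pZ u)) t x y z = pZ (pT (pY u)) t x y z := by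
    rw [hfe]; exact swapTZ hsYu t x y z
  have s5 : pZ (pY (pY u)) t x y z = pY (pY (pZ u)) t x y z := by
    rw [hfe]; exact (swapYZ hsYu t x y z).symm
  have s6 : pZ (pY (pZ u)) t x y z = pY (pZ (pZ u)) t x y z := (swapYZ hsZu t x y z).symm
  have s7 : pZ (pY v) t x y z = pY (pZ v) t x y z := (swapYZ hv t x y z).symm
  -- expansions of mixed derivatives of v
  have hfun1x : (fun s => pT v t s y z) =
      (fun s => (pY (pZ u) t s y z + lam) * pZ v t s y z - pZ (pZ u) t s y z * pY v t s y z) :=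
    funext fun s => hv1 t s y z
  have hA : pX (pT v) t x y z =
      pX (pY (pZ u)) t x y z * pZ v t x y z + (pY (pZ u) t x y z + lam) * pX (pZ v) t x y z
        - (pX (pZ (pZ u)) t x y z * pY v t x y z + pZ (pZ u) t x y z * pX (pY v) t x y z) := by
    show deriv (fun s => pT v t s y z) x = _
    rw [hfun1x]
    exact ((((hasDerivAt_pX hsa t x y z).add_const lam).mul (hasDerivAt_pX hsv2 t x y z)).sub
      ((hasDerivAt_pX hsb t x y z).mul (hasDerivAt_pX hsv1 t x y z))).deriv
  have hfun2t : (fun s => pX v s x y z) =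
      (fun s => pY (pY u) s x y z * pZ v s x y z - (pY (pZ u) s x y z - lam) * pY v s x y z) :=
    funext fun s => hv2 s x y z
  have hB : pT (pX v) t x y z =
      pT (pY (pY u)) t x y z * pZ v t x y z + pY (pY u) t x y z * pT (pZ v) t x y z
        - (pT (pY (pZ u)) t x y z * pY v t x y z
            + (pY (pZ u) t x y z - lam) * pT (pY v) t x y z) := by
    show deriv (fun s => pX v s x y z) t = _
    rw [hfun2t]
    exact (((hasDerivAt_pT hsc t x y z).mul (hasDerivAt_pT hsv2 t x y z)).sub
      (((hasDerivAt_pT hsa t x y z).sub_const lam).mul (hasDerivAt_pT hsv1 t x y z))).deriv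
  have hfun2z : (fun s => pX v t x y s) =
      (fun s => pY (pY u) t x y s * pZ v t x y s - (pY (pZ u) t x y s - lam) * pY v t x y s) :=
    funext fun s => hv2 t x y s
  have hXv2 : pX (pZ v) t x y z =
      pZ (pY (pY u)) t x y z * pZ v t x y z + pY (pY u) t x y z * pZ (pZ v) t x y z
        - (pZ (pY (pZ u)) t x y z * pY v t x y z
            + (pY (pZ u) t x y z - lam) * pZ (pY v) t x y z) := by
    rw [swapXZ hv t x y z]
    show deriv (fun s => pX v t x y s) z = _
    rw [hfun2z]
    exact (((hasDerivAt_pZ hsc t x y z).mul (hasDerivAt_pZ hsv2 t x y z)).sub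
      (((hasDerivAt_pZ hsa t x y z).sub_const lam).mul (hasDerivAt_pZ hsv1 t x y z))).deriv
  have hfun2y : (fun s => pX v t x s z) =
      (fun s => pY (pY u) t x s z * pZ v t x s z - (pY (pZ u) t x s z - lam) * pY v t x s z) :=
    funext fun s => hv2 t x s z
  have hXv1 : pX (pY v) t x y z =
      pY (pY (pY u)) t x y z * pZ v t x y z + pY (pY u) t x y z * pY (pZ v) t x y z
        - (pY (pY (pZ u)) t x y z * pY v t x y z
            + (pY (pZ u) t x y z - lam) * pY (pY v) t x y z) := by
    rw [swapXY hv t x y z]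
    show deriv (fun s => pX v t x s z) y = _
    rw [hfun2y]
    exact (((hasDerivAt_pY hsc t x y z).mul (hasDerivAt_pY hsv2 t x y z)).sub
      (((hasDerivAt_pY hsa t x y z).sub_const lam).mul (hasDerivAt_pY hsv1 t x y z))).deriv
  have hfun1z : (fun s => pT v t x y s) =
      (fun s => (pY (pZ u) t x y s + lam) * pZ v t x y s - pZ (pZ u) t x y s * pY v t x y s) :=
    funext fun s => hv1 t x y s
  have hTv2 : pT (pZ v) t x y z =
      pZ (pY (pZ u)) t x y z * pZ v t x y z + (pY (pZ u) t x y z + lam) * pZ (pZ v) t x y z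
        - (pZ (pZ (pZ u)) t x y z * pY v t x y z + pZ (pZ u) t x y z * pZ (pY v) t x y z) := by
    rw [swapTZ hv t x y z]
    show deriv (fun s => pT v t x y s) z = _
    rw [hfun1z]
    exact ((((hasDerivAt_pZ hsa t x y z).add_const lam).mul (hasDerivAt_pZ hsv2 t x y z)).sub
      ((hasDerivAt_pZ hsb t x y z).mul (hasDerivAt_pZ hsv1 t x y z))).deriv
  have hfun1y : (fun s => pT v t x s z) =
      (fun s => (pY (pZ u) t x s z + lam) * pZ v t x s z - pZ (pZ u) t x s z * pY v t x s z) :=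
    funext fun s => hv1 t x s z
  have hTv1 : pT (pY v) t x y z =
      pY (pY (pZ u)) t x y z * pZ v t x y z + (pY (pZ u) t x y z + lam) * pY (pZ v) t x y z
        - (pY (pZ (pZ u)) t x y z * pY v t x y z + pZ (pZ u) t x y z * pY (pY v) t x y z) := by
    rw [swapTY hv t x y z]
    show deriv (fun s => pT v t x s z) y = _
    rw [hfun1y]
    exact ((((hasDerivAt_pY hsa t x y z).add_const lam).mul (hasDerivAt_pY hsv2 t x y z)).sub
      ((hasDerivAt_pY hsb t x y z).mul (hasDerivAt_pY hsv1 t x y z))).deriv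
  -- expansions of pY/pZ of heavenlyE
  have hEy : pY (heavenlyE u) t x y z =
      pY (pX (pZ u)) t x y z - pY (pT (pY u)) t x y z
        - (pY (pY (pY u)) t x y z * pZ (pZ u) t x y z
            + pY (pY u) t x y z * pY (pZ (pZ u)) t x y z)
        + (2 : ℕ) * pY (pZ u) t x y z ^ (2 - 1) * pY (pY (pZ u)) t x y z := by
    have h := ((((hasDerivAt_pY hsXZu t x y z).sub (hasDerivAt_pY hsTYu t x y z)).sub
        ((hasDerivAt_pY hsc t x y z).mul (hasDerivAt_pY hsb t x y z))).add
        ((hasDerivAt_pY hsa t x y z).pow 2)).deriv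
    exact h
  have hEz : pZ (heavenlyE u) t x y z =
      pZ (pX (pZ u)) t x y z - pZ (pT (pY u)) t x y z
        - (pZ (pY (pY u)) t x y z * pZ (pZ u) t x y z
            + pY (pY u) t x y z * pZ (pZ (pZ u)) t x y z)
        + (2 : ℕ) * pY (pZ u) t x y z ^ (2 - 1) * pZ (pY (pZ u)) t x y z := by
    have h := ((((hasDerivAt_pZ hsXZu t x y z).sub (hasDerivAt_pZ hsTYu t x y z)).sub
        ((hasDerivAt_pZ hsc t x y z).mul (hasDerivAt_pZ hsb t x y z))).add
        ((hasDerivAt_pZ hsa t x y z).pow 2)).deriv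
    exact h
  have hEy' : pY (heavenlyE u) t x y z =
      pY (pX (pZ u)) t x y z - pY (pT (pY u)) t x y z
        - (pY (pY (pY u)) t x y z * pZ (pZ u) t x y z
            + pY (pY u) t x y z * pY (pZ (pZ u)) t x y z)
        + 2 * pY (pZ u) t x y z * pY (pY (pZ u)) t x y z := by
    rw [hEy]; norm_num
  have hEz' : pZ (heavenlyE u) t x y z =
      pZ (pX (pZ u)) t x y z - pZ (pT (pY u)) t x y z
        - (pY (pY (pZ u)) t x y z * pZ (pZ u) t x y z
            + pY (pY u) t x y z * pZ (pZ (pZ u)) t x y z)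
        + 2 * pY (pZ u) t x y z * pY (pZ (pZ u)) t x y z := by
    rw [hEz, s5, s6]; norm_num
  have hMix := (hA.symm.trans (swapTX hv t x y z)).trans hB
  rw [hXv2, hXv1, hTv2, hTv1, s1, s2, s3, s4, s5, s6, s7] at hMix
  linear_combination pZ v t x y z * hEy' - pY v t x y z * hEz' + hMix

end Heav


theorem two_independent_pseudopotentials (u v w : ℝ → ℝ → ℝ → ℝ → ℝ)
    (hu : Smooth4 u) (hv : Smooth4 v) (hw : Smooth4 w) (lam mu : ℝ)
    (hv1 : ∀ t x y z : ℝ,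
      pT v t x y z =
        (pY (pZ u) t x y z + lam) * pZ v t x y z - pZ (pZ u) t x y z * pY v t x y z)
    (hv2 : ∀ t x y z : ℝ,
      pX v t x y z =
        pY (pY u) t x y z * pZ v t x y z - (pY (pZ u) t x y z - lam) * pY v t x y z)
    (hw1 : ∀ t x y z : ℝ,
      pT w t x y z =
        (pY (pZ u) t x y z + mu) * pZ w t x y z - pZ (pZ u) t x y z * pY w t x y z)
    (hw2 : ∀ t x y z : ℝ,
      pX w t x y z =
        pY (pY u) t x y z * pZ w t x y z - (pY (pZ u) t x y z - mu) * pY w t x y z)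
    (t x y z : ℝ)
    (hind : LinearIndependent ℝ
      ![(pY v t x y z, pZ v t x y z), (pY w t x y z, pZ w t x y z)]) :
    pY (heavenlyE u) t x y z = 0 ∧ pZ (heavenlyE u) t x y z = 0 := by
  
  have kv := Heav.key u v hu hv lam hv1 hv2 t x y z
  have kw := Heav.key u w hu hw mu hw1 hw2 t x y z
  set Ey := pY (heavenlyE u) t x y z with hEydef
  set Ez := pZ (heavenlyE u) t x y z with hEzdef
  set V1 := pY v t x y z with hV1def
  set V2 := pZ v t x y z with hV2def
  set W1 := pY w t x y z with hW1def
  set W2 := pZ w t x y z with hW2def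
  rw [LinearIndependent.pair_iff] at hind
  have hdet : V1 * W2 - V2 * W1 ≠ 0 := by
    intro h0
    have h1 : W2 • ((V1, V2) : ℝ × ℝ) + (-V2) • ((W1, W2) : ℝ × ℝ) = 0 := by
      simp only [Prod.smul_mk, smul_eq_mul, Prod.mk_add_mk, Prod.mk_eq_zero]
      constructor
      · linear_combination h0
      · ring
    have h2 : W1 • ((V1, V2) : ℝ × ℝ) + (-V1) • ((W1, W2) : ℝ × ℝ) = 0 := by
      simp only [Prod.smul_mk, smul_eq_mul, Prod.mk_add_mk, Prod.mk_eq_zero]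
      constructor
      · ring
      · linear_combination -h0
    obtain ⟨hW2, hV2⟩ := hind W2 (-V2) h1
    obtain ⟨hW1, hV1⟩ := hind W1 (-V1) h2
    have hV1' : V1 = 0 := neg_eq_zero.mp hV1
    have hV2' : V2 = 0 := neg_eq_zero.mp hV2
    have hone : (1 : ℝ) = 0 := by
      refine (hind 1 0 ?_).1
      rw [hV1', hV2']
      simp
    exact one_ne_zero hone
  have e1 : Ey * (V1 * W2 - V2 * W1) = 0 := by linear_combination V1 * kw - W1 * kv
  have e2 : Ez * (V1 * W2 - V2 * W1) = 0 := by linear_combination V2 * kw - W2 * kv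
  exact ⟨(mul_eq_zero.mp e1).resolve_right hdet, (mul_eq_zero.mp e2).resolve_right hdet⟩
end

section
/- Let u, v : ℝ⁴ → ℝ be smooth, with v satisfying the λ = 0 covering system v_t = u_{yz}v_z − u_{zz}v_y and v_x = u_{yy}v_z − u_{yz}v_y on ℝ⁴. For λ ∈ ℝ set ũ(t,x,y,z) := u(t,x,y+λx,z+λt) and ṽ(t,x,y,z) := v(t,x,y+λx,z+λt). Then ṽ satisfies the covering system with parameter λ for ũ: ṽ_t = (ũ_{yz}+λ)ṽ_z − ũ_{zz}ṽ_y and ṽ_x = ũ_{yy}ṽ_z − (ũ_{yz}−λ)ṽ_y. -/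
/-- The Galilean transform `f(t,x,y,z) ↦ f(t,x,y+λx,z+λt)` generated by `X = x∂_y + t∂_z`. -/
noncomputable def gal (lam : ℝ) (f : ℝ → ℝ → ℝ → ℝ → ℝ) : ℝ → ℝ → ℝ → ℝ → ℝ :=
  fun t x y z => f t x (y + lam * x) (z + lam * t)

/-- Uncurried version of a four-variable function. -/
noncomputable def F4 (f : ℝ → ℝ → ℝ → ℝ → ℝ) : ℝ × ℝ × ℝ × ℝ → ℝ :=
  fun p => f p.1 p.2.1 p.2.2.1 p.2.2.2

lemma deriv_along (f : ℝ → ℝ → ℝ → ℝ → ℝ) (hf : Smooth4 f)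
    (c : ℝ → ℝ × ℝ × ℝ × ℝ) (c' : ℝ × ℝ × ℝ × ℝ) (s : ℝ)
    (hc : HasDerivAt c c' s) :
    deriv (fun s => F4 f (c s)) s = fderiv ℝ (F4 f) (c s) c' := by
  have hF : HasFDerivAt (F4 f) (fderiv ℝ (F4 f) (c s)) (c s) :=
    ((hf.differentiable (by simp)) (c s)).hasFDerivAt
  exact (hF.comp_hasDerivAt s hc).deriv

lemma pT_eq_s7 (f : ℝ → ℝ → ℝ → ℝ → ℝ) (hf : Smooth4 f) (t x y z : ℝ) :
    pT f t x y z = fderiv ℝ (F4 f) (t, x, y, z) (1, 0, 0, 0) := by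
  have hc : HasDerivAt (fun s : ℝ => ((s, x, y, z) : ℝ × ℝ × ℝ × ℝ))
      ((1, 0, 0, 0) : ℝ × ℝ × ℝ × ℝ) t :=
    (hasDerivAt_id t).prodMk ((hasDerivAt_const t x).prodMk
      ((hasDerivAt_const t y).prodMk (hasDerivAt_const t z)))
  exact deriv_along f hf _ _ t hc

lemma pX_eq_s7 (f : ℝ → ℝ → ℝ → ℝ → ℝ) (hf : Smooth4 f) (t x y z : ℝ) :
    pX f t x y z = fderiv ℝ (F4 f) (t, x, y, z) (0, 1, 0, 0) := by
  have hc : HasDerivAt (fun s : ℝ => ((t, s, y, z) : ℝ × ℝ × ℝ × ℝ))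
      ((0, 1, 0, 0) : ℝ × ℝ × ℝ × ℝ) x :=
    (hasDerivAt_const x t).prodMk ((hasDerivAt_id x).prodMk
      ((hasDerivAt_const x y).prodMk (hasDerivAt_const x z)))
  exact deriv_along f hf _ _ x hc

lemma pY_eq_s7 (f : ℝ → ℝ → ℝ → ℝ → ℝ) (hf : Smooth4 f) (t x y z : ℝ) :
    pY f t x y z = fderiv ℝ (F4 f) (t, x, y, z) (0, 0, 1, 0) := by
  have hc : HasDerivAt (fun s : ℝ => ((t, x, s, z) : ℝ × ℝ × ℝ × ℝ))
      ((0, 0, 1, 0) : ℝ × ℝ × ℝ × ℝ) y :=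
    (hasDerivAt_const y t).prodMk ((hasDerivAt_const y x).prodMk
      ((hasDerivAt_id y).prodMk (hasDerivAt_const y z)))
  exact deriv_along f hf _ _ y hc

lemma pZ_eq_s7 (f : ℝ → ℝ → ℝ → ℝ → ℝ) (hf : Smooth4 f) (t x y z : ℝ) :
    pZ f t x y z = fderiv ℝ (F4 f) (t, x, y, z) (0, 0, 0, 1) := by
  have hc : HasDerivAt (fun s : ℝ => ((t, x, y, s) : ℝ × ℝ × ℝ × ℝ))
      ((0, 0, 0, 1) : ℝ × ℝ × ℝ × ℝ) z :=
    (hasDerivAt_const z t).prodMk ((hasDerivAt_const z x).prodMk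
      ((hasDerivAt_const z y).prodMk (hasDerivAt_id z)))
  exact deriv_along f hf _ _ z hc

lemma pT_gal (lam : ℝ) (f : ℝ → ℝ → ℝ → ℝ → ℝ) (hf : Smooth4 f) (t x y z : ℝ) :
    pT (gal lam f) t x y z =
      pT f t x (y + lam * x) (z + lam * t) + lam * pZ f t x (y + lam * x) (z + lam * t) := by
  have hz : HasDerivAt (fun s : ℝ => z + lam * s) lam t := by
    simpa using ((hasDerivAt_id t).const_mul lam).const_add z
  have hc : HasDerivAt (fun s : ℝ => ((s, x, y + lam * x, z + lam * s) : ℝ × ℝ × ℝ × ℝ))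
      ((1, 0, 0, lam) : ℝ × ℝ × ℝ × ℝ) t :=
    (hasDerivAt_id t).prodMk ((hasDerivAt_const t x).prodMk
      ((hasDerivAt_const t (y + lam * x)).prodMk hz))
  have h := deriv_along f hf _ _ t hc
  have hdecomp : ((1, 0, 0, lam) : ℝ × ℝ × ℝ × ℝ)
      = (1, 0, 0, 0) + lam • ((0, 0, 0, 1) : ℝ × ℝ × ℝ × ℝ) := by
    simp [Prod.ext_iff]
  have : pT (gal lam f) t x y z
      = fderiv ℝ (F4 f) (t, x, y + lam * x, z + lam * t) ((1, 0, 0, lam) : ℝ × ℝ × ℝ × ℝ) := h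
  rw [this, hdecomp, map_add, map_smul,
    pT_eq_s7 f hf t x (y + lam * x) (z + lam * t), pZ_eq_s7 f hf t x (y + lam * x) (z + lam * t)]
  simp

lemma pX_gal (lam : ℝ) (f : ℝ → ℝ → ℝ → ℝ → ℝ) (hf : Smooth4 f) (t x y z : ℝ) :
    pX (gal lam f) t x y z =
      pX f t x (y + lam * x) (z + lam * t) + lam * pY f t x (y + lam * x) (z + lam * t) := by
  have hy : HasDerivAt (fun s : ℝ => y + lam * s) lam x := by
    simpa using ((hasDerivAt_id x).const_mul lam).const_add y
  have hc : HasDerivAt (fun s : ℝ => ((t, s, y + lam * s, z + lam * t) : ℝ × ℝ × ℝ × ℝ))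
      ((0, 1, lam, 0) : ℝ × ℝ × ℝ × ℝ) x :=
    (hasDerivAt_const x t).prodMk ((hasDerivAt_id x).prodMk
      (hy.prodMk (hasDerivAt_const x (z + lam * t))))
  have h := deriv_along f hf _ _ x hc
  have hdecomp : ((0, 1, lam, 0) : ℝ × ℝ × ℝ × ℝ)
      = (0, 1, 0, 0) + lam • ((0, 0, 1, 0) : ℝ × ℝ × ℝ × ℝ) := by
    simp [Prod.ext_iff]
  have : pX (gal lam f) t x y z
      = fderiv ℝ (F4 f) (t, x, y + lam * x, z + lam * t) ((0, 1, lam, 0) : ℝ × ℝ × ℝ × ℝ) := h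
  rw [this, hdecomp, map_add, map_smul,
    pX_eq_s7 f hf t x (y + lam * x) (z + lam * t), pY_eq_s7 f hf t x (y + lam * x) (z + lam * t)]
  simp

lemma pY_gal (lam : ℝ) (f : ℝ → ℝ → ℝ → ℝ → ℝ) :
    pY (gal lam f) = gal lam (pY f) := by
  funext t x y z
  exact deriv_comp_add_const (fun w => f t x w (z + lam * t)) (lam * x) y

lemma pZ_gal (lam : ℝ) (f : ℝ → ℝ → ℝ → ℝ → ℝ) :
    pZ (gal lam f) = gal lam (pZ f) := by
  funext t x y z
  exact deriv_comp_add_const (fun w => f t x (y + lam * x) w) (lam * t) z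

theorem spectral_parameter_from_symmetry (u v : ℝ → ℝ → ℝ → ℝ → ℝ)
    (hu : Smooth4 u) (hv : Smooth4 v)
    (h1 : ∀ t x y z : ℝ,
      pT v t x y z =
        pY (pZ u) t x y z * pZ v t x y z - pZ (pZ u) t x y z * pY v t x y z)
    (h2 : ∀ t x y z : ℝ,
      pX v t x y z =
        pY (pY u) t x y z * pZ v t x y z - pY (pZ u) t x y z * pY v t x y z)
    (lam : ℝ) :
    ∀ t x y z : ℝ,
      pT (gal lam v) t x y z =
        (pY (pZ (gal lam u)) t x y z + lam) * pZ (gal lam v) t x y z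
          - pZ (pZ (gal lam u)) t x y z * pY (gal lam v) t x y z ∧
      pX (gal lam v) t x y z =
        pY (pY (gal lam u)) t x y z * pZ (gal lam v) t x y z
          - (pY (pZ (gal lam u)) t x y z - lam) * pY (gal lam v) t x y z := by
  intro t x y z
  set Y := y + lam * x with hY
  set Z := z + lam * t with hZ
  have e1 : pY (pZ (gal lam u)) t x y z = pY (pZ u) t x Y Z := by
    rw [pZ_gal, pY_gal]; rfl
  have e2 : pZ (pZ (gal lam u)) t x y z = pZ (pZ u) t x Y Z := by
    rw [pZ_gal, pZ_gal]; rfl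
  have e3 : pY (pY (gal lam u)) t x y z = pY (pY u) t x Y Z := by
    rw [pY_gal, pY_gal]; rfl
  have e4 : pZ (gal lam v) t x y z = pZ v t x Y Z := by
    rw [pZ_gal]; rfl
  have e5 : pY (gal lam v) t x y z = pY v t x Y Z := by
    rw [pY_gal]; rfl
  constructor
  · rw [pT_gal lam v hv, e1, e2, e4, e5, h1 t x Y Z]
    ring
  · rw [pX_gal lam v hv, e1, e3, e4, e5, h2 t x Y Z]
    ring
end

section
/- Let u, v : ℝ⁴ → ℝ be smooth, λ ∈ ℝ, and suppose v satisfies the covering system v_t = (u_{yz}+λ)v_z − u_{zz}v_y and v_x = u_{yy}v_z − (u_{yz}−λ)v_y for u on ℝ⁴. Define ũ(t,x,y,z) := u(x,t,z,y) and w(t,x,y,z) := v(x,t,z,y). Then w satisfies the swapped covering system w_t = ũ_{zz}w_y − (ũ_{yz}−λ)w_z and w_x = (ũ_{yz}+λ)w_y − ũ_{yy}w_z for ũ. -/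
section Aux

private lemma deriv3 (g : ℝ × ℝ × ℝ × ℝ → ℝ) (hg : Differentiable ℝ g) (t x y z : ℝ) :
    deriv (fun s => g (t, x, s, z)) y = fderiv ℝ g (t, x, y, z) (0, 0, 1, 0) := by
  have hl : HasDerivAt (fun s : ℝ => ((t, x, s, z) : ℝ × ℝ × ℝ × ℝ)) (0, 0, 1, 0) y :=
    (hasDerivAt_const y t).prodMk ((hasDerivAt_const y x).prodMk
      ((hasDerivAt_id y).prodMk (hasDerivAt_const y z)))
  exact ((hg (t, x, y, z)).hasFDerivAt.comp_hasDerivAt y hl).deriv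

private lemma deriv4 (g : ℝ × ℝ × ℝ × ℝ → ℝ) (hg : Differentiable ℝ g) (t x y z : ℝ) :
    deriv (fun s => g (t, x, y, s)) z = fderiv ℝ g (t, x, y, z) (0, 0, 0, 1) := by
  have hl : HasDerivAt (fun s : ℝ => ((t, x, y, s) : ℝ × ℝ × ℝ × ℝ)) (0, 0, 0, 1) z :=
    (hasDerivAt_const z t).prodMk ((hasDerivAt_const z x).prodMk
      ((hasDerivAt_const z y).prodMk (hasDerivAt_id z)))
  exact ((hg (t, x, y, z)).hasFDerivAt.comp_hasDerivAt z hl).deriv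

private lemma clairaut_yz (u : ℝ → ℝ → ℝ → ℝ → ℝ) (hu : Smooth4 u) (t x y z : ℝ) :
    pZ (pY u) t x y z = pY (pZ u) t x y z := by
  set F : ℝ × ℝ × ℝ × ℝ → ℝ := fun p => u p.1 p.2.1 p.2.2.1 p.2.2.2 with hFdef
  have hF : ContDiff ℝ (⊤ : ℕ∞) F := hu
  have hdF : Differentiable ℝ F := hF.differentiable (by simp)
  have hdF' : Differentiable ℝ (fderiv ℝ F) := (hF.fderiv_right (m := 1) (WithTop.coe_le_coe.mpr le_top)).differentiable one_ne_zero
  have hy : ∀ a b c d : ℝ, pY u a b c d = fderiv ℝ F (a, b, c, d) (0, 0, 1, 0) :=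
    fun a b c d => deriv3 F hdF a b c d
  have hz : ∀ a b c d : ℝ, pZ u a b c d = fderiv ℝ F (a, b, c, d) (0, 0, 0, 1) :=
    fun a b c d => deriv4 F hdF a b c d
  have e3 : ℝ × ℝ × ℝ × ℝ := (0, 0, 1, 0)
  have hsymm : ∀ q : ℝ × ℝ × ℝ × ℝ, ∀ v w : ℝ × ℝ × ℝ × ℝ,
      fderiv ℝ (fderiv ℝ F) q v w = fderiv ℝ (fderiv ℝ F) q w v :=
    fun q v w => second_derivative_symmetric (f' := fderiv ℝ F)
      (fun p => (hdF p).hasFDerivAt) (hdF' q).hasFDerivAt v w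
  have happ : ∀ e : ℝ × ℝ × ℝ × ℝ, ∀ q : ℝ × ℝ × ℝ × ℝ,
      fderiv ℝ (fun p => fderiv ℝ F p e) q = (ContinuousLinearMap.apply ℝ ℝ e).comp
        (fderiv ℝ (fderiv ℝ F) q) := by
    intro e q
    exact ((ContinuousLinearMap.apply ℝ ℝ e).hasFDerivAt.comp q (hdF' q).hasFDerivAt).fderiv
  have hdiffapp : ∀ e : ℝ × ℝ × ℝ × ℝ,
      Differentiable ℝ (fun p => fderiv ℝ F p e) := by
    intro e
    exact (ContinuousLinearMap.apply ℝ ℝ e).differentiable.comp hdF'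
  have h1 : pZ (pY u) t x y z
      = fderiv ℝ (fderiv ℝ F) (t, x, y, z) (0, 0, 0, 1) (0, 0, 1, 0) := by
    have : pZ (pY u) t x y z = deriv (fun s => pY u t x y s) z := rfl
    rw [this]
    have : (fun s => pY u t x y s) = fun s => fderiv ℝ F (t, x, y, s) (0, 0, 1, 0) :=
      funext fun s => hy t x y s
    rw [this, deriv4 _ (hdiffapp _) t x y z, happ]
    rfl
  have h2 : pY (pZ u) t x y z
      = fderiv ℝ (fderiv ℝ F) (t, x, y, z) (0, 0, 1, 0) (0, 0, 0, 1) := by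
    have : pY (pZ u) t x y z = deriv (fun s => pZ u t x s z) y := rfl
    rw [this]
    have : (fun s => pZ u t x s z) = fun s => fderiv ℝ F (t, x, s, z) (0, 0, 0, 1) :=
      funext fun s => hz t x s z
    rw [this, deriv3 _ (hdiffapp _) t x y z, happ]
    rfl
  rw [h1, h2, hsymm]

end Aux

theorem covering_under_swap (u v : ℝ → ℝ → ℝ → ℝ → ℝ)
    (hu : Smooth4 u) (hv : Smooth4 v) (lam : ℝ)
    (h1 : ∀ t x y z : ℝ,
      pT v t x y z =
        (pY (pZ u) t x y z + lam) * pZ v t x y z - pZ (pZ u) t x y z * pY v t x y z)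
    (h2 : ∀ t x y z : ℝ,
      pX v t x y z =
        pY (pY u) t x y z * pZ v t x y z - (pY (pZ u) t x y z - lam) * pY v t x y z) :
    ∀ t x y z : ℝ,
      pT (fun t x y z => v x t z y) t x y z =
        pZ (pZ (fun t x y z => u x t z y)) t x y z * pY (fun t x y z => v x t z y) t x y z
          - (pY (pZ (fun t x y z => u x t z y)) t x y z - lam) *
              pZ (fun t x y z => v x t z y) t x y z ∧
      pX (fun t x y z => v x t z y) t x y z =
        (pY (pZ (fun t x y z => u x t z y)) t x y z + lam) *
            pY (fun t x y z => v x t z y) t x y z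
          - pY (pY (fun t x y z => u x t z y)) t x y z *
              pZ (fun t x y z => v x t z y) t x y z := by
  intro t x y z
  have hsym := clairaut_yz u hu
  constructor
  · show pX v x t z y = pY (pY u) x t z y * pZ v x t z y
      - (pZ (pY u) x t z y - lam) * pY v x t z y
    rw [hsym]
    exact h2 x t z y
  · show pT v x t z y = (pZ (pY u) x t z y + lam) * pZ v x t z y
      - pZ (pZ u) x t z y * pY v x t z y
    rw [hsym]
    exact h1 x t z y
end

section
/- Let π : ℝⁿ × ℝ → ℝⁿ be the trivial line bundle and J²(π) its second-order jet space with coordinates (xⁱ, u, u_i, u_{ij}) (1 ≤ i ≤ j ≤ n). A smooth 1-form ϑ on J²(π) satisfies j₂(f)*ϑ = 0 for every smooth local section f (i.e., ϑ is a contact form) if and only if ϑ is pointwise a linear combination (with smooth coefficient functions) of the forms ϑ₀ = du − Σᵢ u_i dxⁱ and ϑ_i = du_i − Σⱼ u_{ij} dxʲ, i = 1, …, n (with u_{ji} = u_{ij}). -/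
/-- Index set of second-order jet coordinates `u_{ij}`, `i ≤ j`. -/
abbrev JetIdx (n : ℕ) := { p : Fin n × Fin n // p.1 ≤ p.2 }

/-- The second-order jet space `J²(π)` of the trivial line bundle over `ℝⁿ`,
with coordinates `(xⁱ, u, u_i, u_{ij})`, `i ≤ j`. -/
abbrev Jet2 (n : ℕ) := (Fin n → ℝ) × ℝ × (Fin n → ℝ) × (JetIdx n → ℝ)

/-- The symmetric extension `u_{ji} = u_{ij}` of the jet coordinates. -/
noncomputable def symEntry {n : ℕ} (U : JetIdx n → ℝ) (i j : Fin n) : ℝ :=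
  if h : i ≤ j then U ⟨(i, j), h⟩ else U ⟨(j, i), le_of_not_ge h⟩

/-- The 2-jet prolongation `j₂(f)` of a section `f`. -/
noncomputable def jet2 {n : ℕ} (f : (Fin n → ℝ) → ℝ) (x : Fin n → ℝ) : Jet2 n :=
  (x, f x, fun i => fderiv ℝ f x (Pi.single i 1),
    fun p => fderiv ℝ (fun y => fderiv ℝ f y (Pi.single p.1.1 1)) x (Pi.single p.1.2 1))


section ContactAux
variable {n : ℕ}

noncomputable abbrev prj (a : Fin n) : (Fin n → ℝ) →L[ℝ] ℝ :=
  ContinuousLinearMap.proj (R := ℝ) (φ := fun _ : Fin n => ℝ) a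

lemma symEntry_symm (U : JetIdx n → ℝ) (a b : Fin n) : symEntry U a b = symEntry U b a := by
  unfold symEntry
  rcases le_or_gt a b with h | h
  · rcases eq_or_lt_of_le h with rfl | h'
    · simp
    · rw [dif_pos h, dif_neg (not_le.mpr h')]
  · rw [dif_neg (not_le.mpr h), dif_pos h.le]

lemma sum_single_mul (g : Fin n → ℝ) (k : Fin n) :
    ∑ a, g a * (Pi.single k 1 : Fin n → ℝ) a = g k := by
  simp [Pi.single_apply, mul_ite]

lemma hz (x₀ : Fin n → ℝ) (a : Fin n) (y : Fin n → ℝ) :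
    HasFDerivAt (fun y : Fin n → ℝ => y a - x₀ a) (prj a) y :=
  ((prj a).hasFDerivAt).sub_const (x₀ a)

noncomputable def qfun (x₀ : Fin n → ℝ) (u : ℝ) (p : Fin n → ℝ) (U : JetIdx n → ℝ) :
    (Fin n → ℝ) → ℝ :=
  fun y => u + (∑ a, p a * (y a - x₀ a)) +
    ∑ a, ∑ b, (symEntry U a b / 2) * ((y a - x₀ a) * (y b - x₀ b))

noncomputable def LQ (x₀ : Fin n → ℝ) (p : Fin n → ℝ) (U : JetIdx n → ℝ) (y : Fin n → ℝ) :
    (Fin n → ℝ) →L[ℝ] ℝ :=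
  (∑ a, p a • prj a) +
    ∑ a, ∑ b, (symEntry U a b / 2) •
      ((y a - x₀ a) • prj b + (y b - x₀ b) • prj a)

lemma hasFDerivAt_qfun (x₀ : Fin n → ℝ) (u : ℝ) (p : Fin n → ℝ) (U : JetIdx n → ℝ)
    (y : Fin n → ℝ) : HasFDerivAt (qfun x₀ u p U) (LQ x₀ p U y) y := by
  have hS1 : HasFDerivAt (fun y : Fin n → ℝ => ∑ a, p a * (y a - x₀ a))
      (∑ a, p a • prj a) y :=
    HasFDerivAt.fun_sum fun a _ => (hz x₀ a y).const_mul (p a)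
  have hS2 : HasFDerivAt
      (fun y : Fin n → ℝ => ∑ a, ∑ b, (symEntry U a b / 2) * ((y a - x₀ a) * (y b - x₀ b)))
      (∑ a, ∑ b, (symEntry U a b / 2) •
        ((y a - x₀ a) • prj b + (y b - x₀ b) • prj a)) y :=
    HasFDerivAt.fun_sum fun a _ => HasFDerivAt.fun_sum fun b _ =>
      ((hz x₀ a y).mul (hz x₀ b y)).const_mul _
  exact (hS1.const_add u).add hS2

lemma LQ_eval (x₀ : Fin n → ℝ) (p : Fin n → ℝ) (U : JetIdx n → ℝ) (y w : Fin n → ℝ) :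
    LQ x₀ p U y w = (∑ a, p a * w a) +
      ∑ a, ∑ b, (symEntry U a b / 2) * ((y a - x₀ a) * w b + (y b - x₀ b) * w a) := by
  simp [LQ, ContinuousLinearMap.sum_apply, smul_eq_mul, mul_add]

lemma LQ_eval_x₀ (x₀ : Fin n → ℝ) (p : Fin n → ℝ) (U : JetIdx n → ℝ) (w : Fin n → ℝ) :
    LQ x₀ p U x₀ w = ∑ a, p a * w a := by
  rw [LQ_eval]; simp

lemma LQ_eval_single (x₀ : Fin n → ℝ) (p : Fin n → ℝ) (U : JetIdx n → ℝ) (y : Fin n → ℝ)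
    (k : Fin n) :
    LQ x₀ p U y (Pi.single k 1) = p k + ∑ b, symEntry U k b * (y b - x₀ b) := by
  rw [LQ_eval, sum_single_mul]
  congr 1
  have step : ∀ a, ∑ b, (symEntry U a b / 2) *
      ((y a - x₀ a) * (Pi.single k 1 : Fin n → ℝ) b + (y b - x₀ b) * (Pi.single k 1 : Fin n → ℝ) a)
      = (symEntry U a k / 2) * (y a - x₀ a)
        + (∑ b, (symEntry U a b / 2) * (y b - x₀ b)) * (Pi.single k 1 : Fin n → ℝ) a := by
    intro a
    have expand : ∀ b, (symEntry U a b / 2) *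
        ((y a - x₀ a) * (Pi.single k 1 : Fin n → ℝ) b + (y b - x₀ b) * (Pi.single k 1 : Fin n → ℝ) a)
        = (symEntry U a b / 2 * (y a - x₀ a)) * (Pi.single k 1 : Fin n → ℝ) b
          + (symEntry U a b / 2 * (y b - x₀ b)) * (Pi.single k 1 : Fin n → ℝ) a := fun b => by ring
    rw [Finset.sum_congr rfl fun b _ => expand b, Finset.sum_add_distrib,
      sum_single_mul (fun b => symEntry U a b / 2 * (y a - x₀ a)) k, ← Finset.sum_mul]
  rw [Finset.sum_congr rfl fun a _ => step a, Finset.sum_add_distrib,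
    sum_single_mul (fun a => ∑ b, (symEntry U a b / 2) * (y b - x₀ b)) k,
    ← Finset.sum_add_distrib]
  refine Finset.sum_congr rfl fun b _ => ?_
  rw [symEntry_symm U b k]
  ring

noncomputable def Lsum (c : Fin n → ℝ) : (Fin n → ℝ) →L[ℝ] ℝ := ∑ b, c b • prj b

lemma Lsum_eval (c w : Fin n → ℝ) : Lsum c w = ∑ b, c b * w b := by
  simp [Lsum, ContinuousLinearMap.sum_apply, smul_eq_mul]

lemma hasFDerivAt_lin (x₀ c : Fin n → ℝ) (d : ℝ) (y : Fin n → ℝ) :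
    HasFDerivAt (fun y : Fin n → ℝ => d + ∑ b, c b * (y b - x₀ b)) (Lsum c) y :=
  (HasFDerivAt.fun_sum fun b _ => (hz x₀ b y).const_mul (c b)).const_add d

lemma qfun_D1 (x₀ : Fin n → ℝ) (u : ℝ) (p : Fin n → ℝ) (U : JetIdx n → ℝ) (k : Fin n) :
    (fun y => fderiv ℝ (qfun x₀ u p U) y (Pi.single k 1)) =
      fun y => p k + ∑ b, symEntry U k b * (y b - x₀ b) :=
  funext fun y => by rw [(hasFDerivAt_qfun x₀ u p U y).fderiv, LQ_eval_single]

lemma qfun_D1_fderiv (x₀ : Fin n → ℝ) (u : ℝ) (p : Fin n → ℝ) (U : JetIdx n → ℝ)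
    (k : Fin n) (y w : Fin n → ℝ) :
    fderiv ℝ (fun z => fderiv ℝ (qfun x₀ u p U) z (Pi.single k 1)) y w =
      ∑ b, symEntry U k b * w b := by
  rw [qfun_D1, (hasFDerivAt_lin x₀ _ _ y).fderiv, Lsum_eval]

lemma qfun_D2_const (x₀ : Fin n → ℝ) (u : ℝ) (p : Fin n → ℝ) (U : JetIdx n → ℝ)
    (k l : Fin n) :
    (fun y => fderiv ℝ (fun z => fderiv ℝ (qfun x₀ u p U) z (Pi.single k 1)) y (Pi.single l 1)) =
      fun _ => symEntry U k l :=
  funext fun y => by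
    rw [qfun_D1_fderiv]
    exact sum_single_mul (fun b => symEntry U k b) l

lemma contDiff_coord (x₀ : Fin n → ℝ) (a : Fin n) :
    ContDiff ℝ (⊤ : ℕ∞) (fun y : Fin n → ℝ => y a - x₀ a) :=
  ((prj a).contDiff).sub contDiff_const

lemma contDiff_qfun (x₀ : Fin n → ℝ) (u : ℝ) (p : Fin n → ℝ) (U : JetIdx n → ℝ) :
    ContDiff ℝ (⊤ : ℕ∞) (qfun x₀ u p U) := by
  unfold qfun
  refine (contDiff_const.add (ContDiff.sum fun a _ => contDiff_const.mul (contDiff_coord x₀ a))).add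
    (ContDiff.sum fun a _ => ContDiff.sum fun b _ => contDiff_const.mul
      ((contDiff_coord x₀ a).mul (contDiff_coord x₀ b)))

lemma smooth_D1 {f : (Fin n → ℝ) → ℝ} (hf : ContDiff ℝ (⊤ : ℕ∞) f) (v : Fin n → ℝ) :
    ContDiff ℝ (⊤ : ℕ∞) (fun y => fderiv ℝ f y v) :=
  (hf.fderiv_right (by simp)).clm_apply contDiff_const

lemma jet2_fderiv {f : (Fin n → ℝ) → ℝ} (hf : ContDiff ℝ (⊤ : ℕ∞) f) (x w : Fin n → ℝ) :
    fderiv ℝ (jet2 f) x w =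
      (w, fderiv ℝ f x w,
        fun i => fderiv ℝ (fun y => fderiv ℝ f y (Pi.single i 1)) x w,
        fun p : JetIdx n => fderiv ℝ
          (fun y => fderiv ℝ (fun z => fderiv ℝ f z (Pi.single p.1.1 1)) y (Pi.single p.1.2 1)) x w) := by
  have h1 : HasFDerivAt (fun y : Fin n → ℝ => y) (ContinuousLinearMap.id ℝ (Fin n → ℝ)) x :=
    hasFDerivAt_id x
  have h2 : HasFDerivAt f (fderiv ℝ f x) x :=
    ((hf.differentiable (by simp)) x).hasFDerivAt
  have h3 : HasFDerivAt (fun y => fun i => fderiv ℝ f y (Pi.single i 1))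
      (ContinuousLinearMap.pi fun i => fderiv ℝ (fun y => fderiv ℝ f y (Pi.single i 1)) x) x := by
    apply hasFDerivAt_pi'.mpr
    intro i
    rw [ContinuousLinearMap.proj_pi]
    exact (((smooth_D1 hf _).differentiable (by simp)) x).hasFDerivAt
  have h4 : HasFDerivAt
      (fun y => fun p : JetIdx n =>
        fderiv ℝ (fun z => fderiv ℝ f z (Pi.single p.1.1 1)) y (Pi.single p.1.2 1))
      (ContinuousLinearMap.pi fun p : JetIdx n =>
        fderiv ℝ (fun y => fderiv ℝ (fun z => fderiv ℝ f z (Pi.single p.1.1 1)) y (Pi.single p.1.2 1)) x) x := by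
    apply hasFDerivAt_pi'.mpr
    intro p
    rw [ContinuousLinearMap.proj_pi]
    exact (((smooth_D1 (smooth_D1 hf _) _).differentiable (by simp)) x).hasFDerivAt
  have H : HasFDerivAt (jet2 f)
      ((ContinuousLinearMap.id ℝ (Fin n → ℝ)).prod ((fderiv ℝ f x).prod
        ((ContinuousLinearMap.pi fun i => fderiv ℝ (fun y => fderiv ℝ f y (Pi.single i 1)) x).prod
        (ContinuousLinearMap.pi fun p : JetIdx n =>
          fderiv ℝ (fun y => fderiv ℝ (fun z => fderiv ℝ f z (Pi.single p.1.1 1)) y (Pi.single p.1.2 1)) x)))) x :=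
    h1.prodMk (h2.prodMk (h3.prodMk h4))
  rw [H.fderiv]
  rfl

lemma jet2_qfun (x₀ : Fin n → ℝ) (u : ℝ) (p : Fin n → ℝ) (U : JetIdx n → ℝ) :
    jet2 (qfun x₀ u p U) x₀ = (x₀, u, p, U) := by
  unfold jet2
  refine Prod.ext rfl (Prod.ext ?_ (Prod.ext ?_ ?_))
  · show qfun x₀ u p U x₀ = u
    simp [qfun]
  · show (fun i => fderiv ℝ (qfun x₀ u p U) x₀ (Pi.single i 1)) = p
    funext i
    rw [(hasFDerivAt_qfun x₀ u p U x₀).fderiv, LQ_eval_single]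
    simp
  · show (fun P : JetIdx n =>
      fderiv ℝ (fun y => fderiv ℝ (qfun x₀ u p U) y (Pi.single P.1.1 1)) x₀ (Pi.single P.1.2 1)) = U
    funext P
    rw [qfun_D1_fderiv, sum_single_mul (fun b => symEntry U P.1.1 b) P.1.2]
    unfold symEntry
    rw [dif_pos P.2]

lemma fderiv_jet2_qfun (x₀ : Fin n → ℝ) (u : ℝ) (p : Fin n → ℝ) (U : JetIdx n → ℝ)
    (w : Fin n → ℝ) :
    fderiv ℝ (jet2 (qfun x₀ u p U)) x₀ w =
      (w, ∑ a, p a * w a, fun i => ∑ b, symEntry U i b * w b, 0) := by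
  rw [jet2_fderiv (contDiff_qfun x₀ u p U) x₀ w]
  refine Prod.ext rfl (Prod.ext ?_ (Prod.ext ?_ ?_))
  · show fderiv ℝ (qfun x₀ u p U) x₀ w = _
    rw [(hasFDerivAt_qfun x₀ u p U x₀).fderiv, LQ_eval_x₀]
  · funext i
    exact qfun_D1_fderiv x₀ u p U i x₀ w
  · funext P
    show fderiv ℝ (fun y => fderiv ℝ (fun z => fderiv ℝ (qfun x₀ u p U) z (Pi.single P.1.1 1)) y
      (Pi.single P.1.2 1)) x₀ w = 0
    rw [qfun_D2_const]
    simp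

noncomputable def cfun (x₀ : Fin n → ℝ) (i j : Fin n) : (Fin n → ℝ) → ℝ :=
  fun y => (y i - x₀ i) * ((y j - x₀ j) * (y j - x₀ j))

noncomputable def LC (x₀ : Fin n → ℝ) (i j : Fin n) (y : Fin n → ℝ) : (Fin n → ℝ) →L[ℝ] ℝ :=
  (y i - x₀ i) • ((y j - x₀ j) • prj j + (y j - x₀ j) • prj j) +
    ((y j - x₀ j) * (y j - x₀ j)) • prj i

lemma hasFDerivAt_cfun (x₀ : Fin n → ℝ) (i j : Fin n) (y : Fin n → ℝ) :
    HasFDerivAt (cfun x₀ i j) (LC x₀ i j y) y :=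
  (hz x₀ i y).mul ((hz x₀ j y).mul (hz x₀ j y))

lemma LC_eval (x₀ : Fin n → ℝ) (i j : Fin n) (y w : Fin n → ℝ) :
    LC x₀ i j y w = (y i - x₀ i) * ((y j - x₀ j) * w j + (y j - x₀ j) * w j) +
      ((y j - x₀ j) * (y j - x₀ j)) * w i := by
  simp [LC, smul_eq_mul, mul_add]

-- the derivative of the explicit "quadratic in z with coefficients c₁ c₂" function
noncomputable def LD1C (x₀ : Fin n → ℝ) (i j : Fin n) (c₁ c₂ : ℝ) (y : Fin n → ℝ) :
    (Fin n → ℝ) →L[ℝ] ℝ :=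
  c₁ • ((y i - x₀ i) • prj j + (y j - x₀ j) • prj i) +
    c₂ • ((y j - x₀ j) • prj j + (y j - x₀ j) • prj j)

lemma LD1C_eval (x₀ : Fin n → ℝ) (i j : Fin n) (c₁ c₂ : ℝ) (y w : Fin n → ℝ) :
    LD1C x₀ i j c₁ c₂ y w =
      c₁ * ((y i - x₀ i) * w j + (y j - x₀ j) * w i) +
        c₂ * ((y j - x₀ j) * w j + (y j - x₀ j) * w j) := by
  simp [LD1C, smul_eq_mul, mul_add]

noncomputable def ffun (x₀ : Fin n → ℝ) (u : ℝ) (p : Fin n → ℝ) (U : JetIdx n → ℝ)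
    (i j : Fin n) : (Fin n → ℝ) → ℝ :=
  fun y => qfun x₀ u p U y + cfun x₀ i j y

lemma contDiff_ffun (x₀ : Fin n → ℝ) (u : ℝ) (p : Fin n → ℝ) (U : JetIdx n → ℝ)
    (i j : Fin n) : ContDiff ℝ (⊤ : ℕ∞) (ffun x₀ u p U i j) :=
  (contDiff_qfun x₀ u p U).add
    ((contDiff_coord x₀ i).mul ((contDiff_coord x₀ j).mul (contDiff_coord x₀ j)))

lemma hasFDerivAt_ffun (x₀ : Fin n → ℝ) (u : ℝ) (p : Fin n → ℝ) (U : JetIdx n → ℝ)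
    (i j : Fin n) (y : Fin n → ℝ) :
    HasFDerivAt (ffun x₀ u p U i j) (LQ x₀ p U y + LC x₀ i j y) y :=
  (hasFDerivAt_qfun x₀ u p U y).add (hasFDerivAt_cfun x₀ i j y)

lemma ffun_D1 (x₀ : Fin n → ℝ) (u : ℝ) (p : Fin n → ℝ) (U : JetIdx n → ℝ) (i j k : Fin n) :
    (fun y => fderiv ℝ (ffun x₀ u p U i j) y (Pi.single k 1)) =
      fun y => (p k + ∑ b, symEntry U k b * (y b - x₀ b)) +
        ((2 * (Pi.single k 1 : Fin n → ℝ) j) * ((y i - x₀ i) * (y j - x₀ j)) +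
          (Pi.single k 1 : Fin n → ℝ) i * ((y j - x₀ j) * (y j - x₀ j))) :=
  funext fun y => by
    rw [(hasFDerivAt_ffun x₀ u p U i j y).fderiv, ContinuousLinearMap.add_apply,
      LQ_eval_single, LC_eval]
    ring

lemma ffun_D1_fderiv (x₀ : Fin n → ℝ) (u : ℝ) (p : Fin n → ℝ) (U : JetIdx n → ℝ)
    (i j k : Fin n) (y w : Fin n → ℝ) :
    fderiv ℝ (fun z => fderiv ℝ (ffun x₀ u p U i j) z (Pi.single k 1)) y w =
      (∑ b, symEntry U k b * w b) +
        LD1C x₀ i j (2 * (Pi.single k 1 : Fin n → ℝ) j) ((Pi.single k 1 : Fin n → ℝ) i) y w := by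
  rw [ffun_D1]
  have H : HasFDerivAt
      (fun y => (p k + ∑ b, symEntry U k b * (y b - x₀ b)) +
        ((2 * (Pi.single k 1 : Fin n → ℝ) j) * ((y i - x₀ i) * (y j - x₀ j)) +
          (Pi.single k 1 : Fin n → ℝ) i * ((y j - x₀ j) * (y j - x₀ j))))
      (Lsum (fun b => symEntry U k b) +
        LD1C x₀ i j (2 * (Pi.single k 1 : Fin n → ℝ) j) ((Pi.single k 1 : Fin n → ℝ) i) y) y :=
    (hasFDerivAt_lin x₀ _ (p k) y).add
      ((((hz x₀ i y).mul (hz x₀ j y)).const_mul _).add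
        (((hz x₀ j y).mul (hz x₀ j y)).const_mul _))
  rw [H.fderiv, ContinuousLinearMap.add_apply, Lsum_eval]

lemma third_eval (i j k l : Fin n) (hij : i ≤ j) (hkl : k ≤ l) :
    2 * (Pi.single k 1 : Fin n → ℝ) j *
        ((Pi.single l 1 : Fin n → ℝ) j * (Pi.single j 1 : Fin n → ℝ) i +
          (Pi.single l 1 : Fin n → ℝ) i) +
      2 * (Pi.single k 1 : Fin n → ℝ) i * (Pi.single l 1 : Fin n → ℝ) j =
    (if i = j then 6 else 2) * (if k = i ∧ l = j then 1 else 0) := by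
  simp only [Pi.single_apply]
  by_cases h1 : j = k
  · subst h1
    by_cases h2 : i = l
    · subst h2
      have hij' : i = j := le_antisymm hij hkl
      subst hij'
      norm_num
    · by_cases h3 : j = l
      · subst h3
        simp [h2, show ¬ j = i from fun h => h2 h.symm]
      · simp [h2, h3, show ¬ l = j from fun h => h3 h.symm]
  · by_cases h2 : i = k
    · by_cases h3 : j = l
      · subst h2; subst h3
        have hne : ¬ i = j := fun h => h1 h.symm
        simp [h1, hne]
      · simp [h1, h2, h3, show ¬ l = j from fun h => h3 h.symm]
    · simp [h1, h2, show ¬ k = i from fun h => h2 h.symm]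

lemma ffun_D2 (x₀ : Fin n → ℝ) (u : ℝ) (p : Fin n → ℝ) (U : JetIdx n → ℝ) (i j k l : Fin n) :
    (fun y => fderiv ℝ (fun z => fderiv ℝ (ffun x₀ u p U i j) z (Pi.single k 1)) y
        (Pi.single l 1)) =
      fun y => symEntry U k l +
        LD1C x₀ i j (2 * (Pi.single k 1 : Fin n → ℝ) j) ((Pi.single k 1 : Fin n → ℝ) i) y
          (Pi.single l 1) :=
  funext fun y => by rw [ffun_D1_fderiv, sum_single_mul (fun b => symEntry U k b) l]

lemma ffun_D3 (x₀ : Fin n → ℝ) (u : ℝ) (p : Fin n → ℝ) (U : JetIdx n → ℝ) (i j k l : Fin n)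
    (hij : i ≤ j) (hkl : k ≤ l) :
    fderiv ℝ (fun y => fderiv ℝ (fun z => fderiv ℝ (ffun x₀ u p U i j) z (Pi.single k 1)) y
        (Pi.single l 1)) x₀ (Pi.single j 1)
      = (if i = j then 6 else 2) * (if k = i ∧ l = j then 1 else 0) := by
  rw [ffun_D2]
  set c₁ := 2 * (Pi.single k 1 : Fin n → ℝ) j with hc₁
  set c₂ := (Pi.single k 1 : Fin n → ℝ) i with hc₂
  set t := (Pi.single l 1 : Fin n → ℝ) with ht
  have hrw : (fun y => symEntry U k l + LD1C x₀ i j c₁ c₂ y t) =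
      fun y => symEntry U k l +
        (c₁ * ((y i - x₀ i) * t j + (y j - x₀ j) * t i) +
          c₂ * ((y j - x₀ j) * t j + (y j - x₀ j) * t j)) :=
    funext fun y => by rw [LD1C_eval]
  rw [hrw]
  have H : HasFDerivAt
      (fun y : Fin n → ℝ => symEntry U k l +
        (c₁ * ((y i - x₀ i) * t j + (y j - x₀ j) * t i) +
          c₂ * ((y j - x₀ j) * t j + (y j - x₀ j) * t j)))
      ((c₁ • (t j • prj i + t i • prj j) +
        c₂ • (t j • prj j + t j • prj j))) x₀ :=
    (((((hz x₀ i x₀).mul_const (t j)).add ((hz x₀ j x₀).mul_const (t i))).const_mul c₁).add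
      ((((hz x₀ j x₀).mul_const (t j)).add ((hz x₀ j x₀).mul_const (t j))).const_mul c₂)).const_add _
  rw [H.fderiv]
  have : ((c₁ • (t j • prj i + t i • prj j) + c₂ • (t j • prj j + t j • prj j)) :
      (Fin n → ℝ) →L[ℝ] ℝ) (Pi.single j 1) =
      c₁ * (t j * (Pi.single j 1 : Fin n → ℝ) i + t i * 1) + c₂ * (t j * 1 + t j * 1) := by
    simp [smul_eq_mul, Pi.single_eq_same]
    ring
  rw [this, ← third_eval i j k l hij hkl, hc₁, hc₂, ht]
  ring

lemma jet2_ffun (x₀ : Fin n → ℝ) (u : ℝ) (p : Fin n → ℝ) (U : JetIdx n → ℝ) (i j : Fin n) :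
    jet2 (ffun x₀ u p U i j) x₀ = (x₀, u, p, U) := by
  unfold jet2
  refine Prod.ext rfl (Prod.ext ?_ (Prod.ext ?_ ?_))
  · show ffun x₀ u p U i j x₀ = u
    simp [ffun, qfun, cfun]
  · show (fun k => fderiv ℝ (ffun x₀ u p U i j) x₀ (Pi.single k 1)) = p
    funext k
    rw [congrFun (ffun_D1 x₀ u p U i j k) x₀]
    simp
  · funext P
    show fderiv ℝ (fun y => fderiv ℝ (ffun x₀ u p U i j) y (Pi.single P.1.1 1)) x₀
      (Pi.single P.1.2 1) = U P
    rw [ffun_D1_fderiv, sum_single_mul (fun b => symEntry U P.1.1 b) P.1.2, LD1C_eval]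
    simp only [sub_self, zero_mul, mul_zero, add_zero, zero_add]
    unfold symEntry
    rw [dif_pos P.2]

lemma fderiv_jet2_ffun (x₀ : Fin n → ℝ) (u : ℝ) (p : Fin n → ℝ) (U : JetIdx n → ℝ)
    (i j : Fin n) (hij : i ≤ j) :
    fderiv ℝ (jet2 (ffun x₀ u p U i j)) x₀ (Pi.single j 1) =
      (Pi.single j 1, p j, fun k => symEntry U k j,
        fun Q : JetIdx n => (if i = j then 6 else 2) * (if Q.1.1 = i ∧ Q.1.2 = j then 1 else 0)) := by
  rw [jet2_fderiv (contDiff_ffun x₀ u p U i j) x₀ _]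
  refine Prod.ext rfl (Prod.ext ?_ (Prod.ext ?_ ?_))
  · show fderiv ℝ (ffun x₀ u p U i j) x₀ (Pi.single j 1) = p j
    rw [(hasFDerivAt_ffun x₀ u p U i j x₀).fderiv, ContinuousLinearMap.add_apply,
      LQ_eval_x₀, LC_eval, sum_single_mul]
    simp
  · funext k
    show fderiv ℝ (fun y => fderiv ℝ (ffun x₀ u p U i j) y (Pi.single k 1)) x₀ (Pi.single j 1) = _
    rw [ffun_D1_fderiv, sum_single_mul (fun b => symEntry U k b) j, LD1C_eval]
    simp
  · funext Q
    exact ffun_D3 x₀ u p U i j Q.1.1 Q.1.2 hij Q.2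

lemma fderiv_jet2_qfun_single (x₀ : Fin n → ℝ) (u : ℝ) (p : Fin n → ℝ) (U : JetIdx n → ℝ)
    (j : Fin n) :
    fderiv ℝ (jet2 (qfun x₀ u p U)) x₀ (Pi.single j 1) =
      (Pi.single j 1, p j, fun k => symEntry U k j, 0) := by
  rw [fderiv_jet2_qfun]
  refine Prod.ext rfl (Prod.ext ?_ (Prod.ext ?_ rfl))
  · exact sum_single_mul p j
  · funext k
    exact sum_single_mul (fun b => symEntry U k b) j

lemma clm_eval_sum (L : (Fin n → ℝ) →L[ℝ] ℝ) (w : Fin n → ℝ) :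
    L w = ∑ i, w i * L (Pi.single i 1) := by
  conv_lhs => rw [← Finset.univ_sum_single w]
  rw [map_sum]
  refine Finset.sum_congr rfl fun i _ => ?_
  have : Pi.single i (w i) = w i • (Pi.single i 1 : Fin n → ℝ) := by
    funext j
    by_cases h : j = i <;> simp [Pi.single_apply, h]
  rw [this, map_smul, smul_eq_mul]

lemma sym_snd {f : (Fin n → ℝ) → ℝ} (hf : ContDiff ℝ (⊤ : ℕ∞) f) (x v w : Fin n → ℝ) :
    fderiv ℝ (fun y => fderiv ℝ f y v) x w = fderiv ℝ (fun y => fderiv ℝ f y w) x v := by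
  have hdiff : DifferentiableAt ℝ (fderiv ℝ f) x :=
    ((hf.fderiv_right (m := 1) (WithTop.coe_le_coe.mpr le_top)).differentiable one_ne_zero) x
  have key : ∀ u : Fin n → ℝ, fderiv ℝ (fun y => fderiv ℝ f y u) x =
      (ContinuousLinearMap.apply ℝ ℝ u).comp (fderiv ℝ (fderiv ℝ f) x) := fun u =>
    ((ContinuousLinearMap.apply ℝ ℝ u).hasFDerivAt.comp x hdiff.hasFDerivAt).fderiv
  rw [key v, key w]
  exact second_derivative_symmetric (f' := fderiv ℝ f)
    (fun y => ((hf.differentiable (by simp)) y).hasFDerivAt) hdiff.hasFDerivAt w v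

end ContactAux

/-- A smooth 1-form `ϑ` on `J²(π)` is annihilated by all 2-jets of smooth sections
iff it is a linear combination, with smooth coefficients, of the contact forms
`ϑ₀ = du − Σ u_i dxⁱ` and `ϑ_i = du_i − Σ u_{ij} dxʲ`. -/
theorem contact_form_characterization (n : ℕ)
    (th : Jet2 n → (Jet2 n →L[ℝ] ℝ)) (hth : ContDiff ℝ (⊤ : ℕ∞) th) :
    (∀ f : (Fin n → ℝ) → ℝ, ContDiff ℝ (⊤ : ℕ∞) f →
      ∀ x w : Fin n → ℝ, th (jet2 f x) (fderiv ℝ (jet2 f) x w) = 0) ↔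
    ∃ (μ₀ : Jet2 n → ℝ) (μ : Fin n → Jet2 n → ℝ),
      ContDiff ℝ (⊤ : ℕ∞) μ₀ ∧ (∀ i, ContDiff ℝ (⊤ : ℕ∞) (μ i)) ∧
      ∀ (q δ : Jet2 n),
        th q δ =
          μ₀ q * (δ.2.1 - ∑ i, q.2.2.1 i * δ.1 i) +
            ∑ i, μ i q * (δ.2.2.1 i - ∑ j, symEntry q.2.2.2 i j * δ.1 j) := by
  constructor
  · -- forward direction
    intro H
    refine ⟨fun q => th q (0, 1, 0, 0), fun i q => th q (0, 0, Pi.single i 1, 0),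
      hth.clm_apply contDiff_const, fun i => hth.clm_apply contDiff_const, ?_⟩
    intro q δ
    obtain ⟨x₀, u, p, U⟩ := q
    obtain ⟨δx, δu, δp, δU⟩ := δ
    set q : Jet2 n := (x₀, u, p, U) with hq
    -- fact B : quadratic sections
    have hB : ∀ w : Fin n → ℝ,
        th q (w, ∑ a, p a * w a, fun k => ∑ b, symEntry U k b * w b, 0) = 0 := by
      intro w
      have := H (qfun x₀ u p U) (contDiff_qfun x₀ u p U) x₀ w
      rwa [jet2_qfun, fderiv_jet2_qfun] at this
    have hBj : ∀ j : Fin n,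
        th q (Pi.single j 1, p j, fun k => symEntry U k j, 0) = 0 := by
      intro j
      have := H (qfun x₀ u p U) (contDiff_qfun x₀ u p U) x₀ (Pi.single j 1)
      rwa [jet2_qfun, fderiv_jet2_qfun_single] at this
    -- fact A : cubic sections kill the dU directions
    have hA : ∀ P : JetIdx n, th q (0, 0, 0, Pi.single P 1) = 0 := by
      intro P
      obtain ⟨⟨i, j⟩, hij⟩ := P
      have hC := H (ffun x₀ u p U i j) (contDiff_ffun x₀ u p U i j) x₀ (Pi.single j 1)
      rw [jet2_ffun, fderiv_jet2_ffun x₀ u p U i j hij] at hC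
      set κ : ℝ := if i = j then 6 else 2 with hκ
      have hκne : κ ≠ 0 := by rw [hκ]; split <;> norm_num
      have hdiff :
          ((Pi.single j 1, p j, fun k => symEntry U k j,
              fun Q : JetIdx n => κ * (if Q.1.1 = i ∧ Q.1.2 = j then 1 else 0)) : Jet2 n)
            - (Pi.single j 1, p j, fun k => symEntry U k j, 0)
          = κ • ((0, 0, 0, Pi.single (⟨(i, j), hij⟩ : JetIdx n) 1) : Jet2 n) := by
        rw [Prod.mk_sub_mk, Prod.mk_sub_mk, Prod.mk_sub_mk, Prod.smul_mk, Prod.smul_mk,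
          Prod.smul_mk]
        refine Prod.ext (by simp) (Prod.ext (by simp) (Prod.ext (by simp) ?_))
        funext Q
        have hcond : (Q = (⟨(i, j), hij⟩ : JetIdx n)) = (Q.1.1 = i ∧ Q.1.2 = j) :=
          propext ⟨fun h => by subst h; exact ⟨rfl, rfl⟩,
            fun h => Subtype.ext (Prod.ext h.1 h.2)⟩
        simp [Pi.single_apply, hcond, mul_ite]
      have h0 : κ * th q (0, 0, 0, Pi.single (⟨(i, j), hij⟩ : JetIdx n) 1) = 0 := by
        rw [← smul_eq_mul, ← map_smul, ← hdiff, map_sub, hC, hBj, sub_zero]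
      exact (mul_eq_zero.mp h0).resolve_left hκne
    -- decompose a general tangent vector
    have hdecomp : ((δx, δu, δp, δU) : Jet2 n)
        = ((δx, ∑ a, p a * δx a, fun k => ∑ b, symEntry U k b * δx b, 0) : Jet2 n)
          + (δu - ∑ a, p a * δx a) • ((0, 1, 0, 0) : Jet2 n)
          + (∑ k, (δp k - ∑ b, symEntry U k b * δx b) • ((0, 0, Pi.single k 1, 0) : Jet2 n))
          + ∑ P : JetIdx n, δU P • ((0, 0, 0, Pi.single P 1) : Jet2 n) := by
      refine Prod.ext ?_ (Prod.ext ?_ (Prod.ext ?_ ?_))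
      · simp [Prod.fst_sum]
      · simp [Prod.snd_sum, Prod.fst_sum]
      · funext k
        simp only [Prod.snd_add, Prod.fst_add, Prod.smul_snd, Prod.smul_fst, Prod.snd_sum,
          Prod.fst_sum, smul_zero, Pi.add_apply, Pi.smul_apply, smul_eq_mul,
          Finset.sum_apply, Pi.zero_apply, mul_zero, add_zero, zero_add, mul_one,
          Pi.single_apply, mul_ite, Finset.sum_ite_eq, Finset.mem_univ, if_true,
          Finset.sum_const_zero]
        ring
      · funext P
        simp only [Prod.snd_add, Prod.smul_snd, Prod.snd_sum, smul_zero, Pi.add_apply,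
          Pi.smul_apply, smul_eq_mul, Finset.sum_apply, Pi.zero_apply, mul_zero, add_zero,
          zero_add, Pi.single_apply, mul_ite, mul_one, Finset.sum_ite_eq, Finset.mem_univ,
          if_true, Finset.sum_const_zero]
    show th q (δx, δu, δp, δU) =
        th q (0, 1, 0, 0) * (δu - ∑ a, p a * δx a) +
          ∑ k, th q (0, 0, Pi.single k 1, 0) * (δp k - ∑ b, symEntry U k b * δx b)
    conv_lhs => rw [hdecomp]
    simp only [map_add, map_smul, map_sum, smul_eq_mul]
    rw [hB δx]
    have hsum4 : ∑ P : JetIdx n, δU P * th q (0, 0, 0, Pi.single P 1) = 0 :=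
      Finset.sum_eq_zero fun P _ => by rw [hA P, mul_zero]
    rw [hsum4, zero_add, add_zero]
    congr 1
    · exact mul_comm _ _
    · exact Finset.sum_congr rfl fun k _ => mul_comm _ _
  · -- reverse direction
    rintro ⟨μ₀, μ, hμ₀, hμ, hrep⟩ f hf x w
    rw [hrep, jet2_fderiv hf x w]
    have hzero1 : fderiv ℝ f x w - ∑ i, (jet2 f x).2.2.1 i * w i = 0 := by
      have : (jet2 f x).2.2.1 = fun i => fderiv ℝ f x (Pi.single i 1) := rfl
      rw [this, clm_eval_sum (fderiv ℝ f x) w, sub_eq_zero]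
      exact Finset.sum_congr rfl fun i _ => mul_comm _ _
    have hzero2 : ∀ i, fderiv ℝ (fun y => fderiv ℝ f y (Pi.single i 1)) x w
        - ∑ j, symEntry (jet2 f x).2.2.2 i j * w j = 0 := by
      intro i
      have hsym : ∀ j, symEntry (jet2 f x).2.2.2 i j
          = fderiv ℝ (fun y => fderiv ℝ f y (Pi.single i 1)) x (Pi.single j 1) := by
        intro j
        have : (jet2 f x).2.2.2 = fun P : JetIdx n =>
            fderiv ℝ (fun y => fderiv ℝ f y (Pi.single P.1.1 1)) x (Pi.single P.1.2 1) := rfl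
        rw [this]
        unfold symEntry
        split
        · rfl
        · exact sym_snd hf x (Pi.single j 1) (Pi.single i 1)
      rw [Finset.sum_congr rfl fun j _ => by rw [hsym j],
        clm_eval_sum (fderiv ℝ (fun y => fderiv ℝ f y (Pi.single i 1)) x) w, sub_eq_zero]
      exact Finset.sum_congr rfl fun j _ => mul_comm _ _
    rw [hzero1]
    simp only [mul_zero, zero_add]
    refine Finset.sum_eq_zero fun i _ => ?_
    rw [hzero2 i, mul_zero]
end
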